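/- arXiv:2504.06033 — 10 statements merged into one kernel-verified Lean document; each statement's English description precedes it below -/
import Mathlib

section
/- Let G = (V,E) be a finite simple undirected graph, let k > 1 be an integer, and let s, t ∈ V be distinct vertices. Then there exists an (s,t)-vertex cut of size less than k if and only if there exists a fractional (s,t)-vertex cut of size at most k - 1/2. -/
/-!
The indicator of the separator of an integral cut is a fractional cut of the same size.
Conversely, let `C` be a fractional cut and `d v` the least `C`-length of an `s`–`v` walk.
For `θ ∈ (0, 1]` the ball `L_θ = {v | d v < θ}` contains `s` and, since every `s`–`t` walk
has length at least `1` and `C t = 0`, neither contains nor touches `t`; so its vertex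
boundary separates it from the rest. A boundary vertex `v` satisfies `d v - C v < θ ≤ d v`,
so averaging over `θ` the boundary has expected size at most `∑ v, C v ≤ k - 1/2 < k`, and
some threshold gives a cut of size less than `k`.
-/

open Finset MeasureTheory

open Classical in
theorem MeasureTheory.exists_mem_card_filter_mem_lt {α ι : Type*} [MeasurableSpace α]
    [Fintype ι] (μ : Measure α) (A : Set α) (I : ι → Set α) (hI : ∀ i, MeasurableSet (I i))
    {k : ℕ} (h : ∑ i, μ (I i) < k * μ A) : ∃ x ∈ A, #{i | x ∈ I i} < k := by
  by_contra! hA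
  refine (h.trans_le' ?_).false
  calc (k : ENNReal) * μ A = ∫⁻ _ in A, (k : ENNReal) ∂μ := (setLIntegral_const A _).symm
    _ ≤ ∫⁻ x in A, ∑ i, (I i).indicator 1 x ∂μ := by
        refine setLIntegral_mono (by fun_prop (disch := exact hI _)) fun x hx => ?_
        simpa [Set.indicator_apply] using hA x hx
    _ = ∑ i, μ.restrict A (I i) := by
        rw [lintegral_finsetSum _ fun i _ => measurable_one.indicator (hI i)]
        simp_rw [lintegral_indicator_one (hI _)]
    _ ≤ ∑ i, μ (I i) := sum_le_sum fun i _ => Measure.restrict_apply_le _ _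

namespace SimpleGraph

variable {V : Type*} (G : SimpleGraph V)

structure IsVertexCut (s t : V) (L S R : Finset V) : Prop where
  cover : ∀ v, v ∈ L ∨ v ∈ S ∨ v ∈ R
  disjoint_left_sep : Disjoint L S
  disjoint_left_right : Disjoint L R
  disjoint_sep_right : Disjoint S R
  left_mem : s ∈ L
  right_mem : t ∈ R
  not_adj : ∀ u ∈ L, ∀ v ∈ R, ¬ G.Adj u v

structure IsFractionalCut (s t : V) (C : V → ℝ) : Prop where
  nonneg : ∀ v, 0 ≤ C v
  apply_left : C s = 0
  apply_right : C t = 0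
  one_le_sum_of_isPath : ∀ p : G.Walk s t, p.IsPath → 1 ≤ (p.support.map C).sum

variable {G} {s t : V}

theorem IsVertexCut.exists_mem_support_mem {L S R : Finset V} (h : G.IsVertexCut s t L S R)
    {x y : V} (p : G.Walk x y) (hx : x ∈ L) (hy : y ∈ R) : ∃ v ∈ p.support, v ∈ S := by
  obtain ⟨d, hd, hdL, hdnL⟩ :=
    p.exists_boundary_dart L hx (Finset.disjoint_right.mp h.disjoint_left_right hy)
  refine ⟨d.snd, p.dart_snd_mem_support_of_mem_darts hd, ?_⟩
  have hdR : d.snd ∉ R := fun hR => h.not_adj _ hdL _ hR d.adj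
  exact ((h.cover d.snd).resolve_left hdnL).resolve_right hdR

theorem IsVertexCut.isFractionalCut_indicator {L S R : Finset V}
    (h : G.IsVertexCut s t L S R) : G.IsFractionalCut s t ((S : Set V).indicator 1) where
  nonneg v := Set.indicator_nonneg (fun _ _ => zero_le_one) v
  apply_left := Set.indicator_of_notMem (Finset.disjoint_left.mp h.disjoint_left_sep h.left_mem) _
  apply_right :=
    Set.indicator_of_notMem (Finset.disjoint_right.mp h.disjoint_sep_right h.right_mem) _
  one_le_sum_of_isPath p _ := by
    obtain ⟨v, hvp, hvS⟩ := h.exists_mem_support_mem p h.left_mem h.right_mem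
    calc (1 : ℝ) = (S : Set V).indicator 1 v := by simp [hvS]
      _ ≤ _ := List.single_le_sum (by simp [Set.indicator_nonneg]) _ (List.mem_map_of_mem hvp)

theorem Walk.sum_support_concat {u v w : V} (p : G.Walk u v) (h : G.Adj v w) (C : V → ℝ) :
    ((p.concat h).support.map C).sum = (p.support.map C).sum + C w := by
  simp [Walk.support_concat]

theorem IsFractionalCut.one_le_sum {C : V → ℝ} (hC : G.IsFractionalCut s t C)
    (p : G.Walk s t) : 1 ≤ (p.support.map C).sum := by
  classical
  exact (hC.one_le_sum_of_isPath _ p.bypass_isPath).trans <|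
    (p.support_bypass_sublist_support.map C).sum_le_sum (by simp [hC.nonneg])

variable (G) in
/-- Junk value `0` when `v` is unreachable from `s`; it is only evaluated at reachable `v`. -/
noncomputable def weightDist (C : V → ℝ) (s v : V) : ℝ :=
  ⨅ p : G.Walk s v, (p.support.map C).sum

section Threshold

variable [Fintype V]

open Classical in
variable (G) in
noncomputable def vertexBoundary (L : Finset V) : Finset V :=
  {v | v ∉ L ∧ ∃ u ∈ L, G.Adj u v}

open Classical in
variable (G) in
noncomputable def weightBall (C : V → ℝ) (s : V) (θ : ℝ) : Finset V :=
  {v | ∃ p : G.Walk s v, (p.support.map C).sum < θ}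

open Classical in
theorem isVertexCut_vertexBoundary {L : Finset V} (hs : s ∈ L) (ht : t ∉ L)
    (hadj : ∀ u ∈ L, ¬ G.Adj u t) :
    G.IsVertexCut s t L (G.vertexBoundary L) (L ∪ G.vertexBoundary L)ᶜ where
  cover v := by by_cases v ∈ L <;> by_cases v ∈ G.vertexBoundary L <;> simp_all
  disjoint_left_sep := by simp +contextual [vertexBoundary, Finset.disjoint_left]
  disjoint_left_right := by simp +contextual [Finset.disjoint_left]
  disjoint_sep_right := by simp +contextual [Finset.disjoint_left]
  left_mem := hs
  right_mem := by simpa [vertexBoundary, ht] using hadj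
  not_adj u hu v hv huv := by simp_all [vertexBoundary]

variable {C : V → ℝ} {θ : ℝ}

open Classical in
theorem IsFractionalCut.isVertexCut_weightBall (hC : G.IsFractionalCut s t C)
    (hθ : θ ∈ Set.Ioc 0 1) :
    G.IsVertexCut s t (G.weightBall C s θ) (G.vertexBoundary (G.weightBall C s θ))
      (G.weightBall C s θ ∪ G.vertexBoundary (G.weightBall C s θ))ᶜ := by
  refine isVertexCut_vertexBoundary ?_ ?_ fun u hu hut => ?_
  · simpa [weightBall] using ⟨Walk.nil, by simpa [hC.apply_left] using hθ.1⟩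
  · simpa [weightBall] using fun p => hθ.2.trans (hC.one_le_sum p)
  · obtain ⟨p, hp⟩ := by simpa [weightBall] using hu
    have := hC.one_le_sum (p.concat hut)
    rw [Walk.sum_support_concat, hC.apply_right] at this
    linarith [hθ.2]

theorem mem_Ioc_weightDist_of_mem_vertexBoundary (hC : ∀ v, 0 ≤ C v) {v : V}
    (hv : v ∈ G.vertexBoundary (G.weightBall C s θ)) :
    θ ∈ Set.Ioc (G.weightDist C s v - C v) (G.weightDist C s v) := by
  classical
  obtain ⟨hfar, u, ⟨p, hp⟩, huv⟩ : (∀ q : G.Walk s v, θ ≤ (q.support.map C).sum) ∧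
      ∃ u, (∃ p : G.Walk s u, (p.support.map C).sum < θ) ∧ G.Adj u v := by
    simpa [vertexBoundary, weightBall] using hv
  have hbdd : BddBelow (Set.range fun q : G.Walk s v => (q.support.map C).sum) :=
    ⟨0, by rintro _ ⟨q, rfl⟩; exact List.sum_nonneg (by simp [hC])⟩
  have hle := ciInf_le hbdd (p.concat huv)
  rw [Walk.sum_support_concat] at hle
  have : Nonempty (G.Walk s v) := ⟨p.concat huv⟩
  exact ⟨by rw [weightDist]; linarith, le_ciInf hfar⟩

theorem IsFractionalCut.exists_card_vertexBoundary_weightBall_lt (hC : G.IsFractionalCut s t C)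
    {k : ℕ} (hk : ∑ v, C v < k) :
    ∃ θ ∈ Set.Ioc (0 : ℝ) 1, #(G.vertexBoundary (G.weightBall C s θ)) < k := by
  classical
  set d := G.weightDist C s
  have hvol : ∑ v, volume (Set.Ioc (d v - C v) (d v)) < k * volume (Set.Ioc (0 : ℝ) 1) := by
    have hk0 : k ≠ 0 := by
      rintro rfl
      exact (sum_nonneg fun v _ => hC.nonneg v).not_gt (by simpa using hk)
    simpa [Real.volume_Ioc, ← ENNReal.ofReal_sum_of_nonneg fun v _ => hC.nonneg v,
      ENNReal.ofReal_lt_natCast hk0] using hk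
  obtain ⟨θ, hθ, hcard⟩ :=
    exists_mem_card_filter_mem_lt volume _ _ (fun _ => measurableSet_Ioc) hvol
  refine ⟨θ, hθ, (card_le_card fun v hv => ?_).trans_lt hcard⟩
  simpa using mem_Ioc_weightDist_of_mem_vertexBoundary hC.nonneg hv

theorem IsFractionalCut.exists_isVertexCut_card_lt (hC : G.IsFractionalCut s t C) {k : ℕ}
    (hk : ∑ v, C v < k) : ∃ L S R : Finset V, G.IsVertexCut s t L S R ∧ #S < k := by
  obtain ⟨θ, hθ, hcard⟩ := hC.exists_card_vertexBoundary_weightBall_lt hk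
  exact ⟨_, _, _, hC.isVertexCut_weightBall hθ, hcard⟩

end Threshold

end SimpleGraph

open SimpleGraph in
theorem stmt_0_general {V : Type*} [Fintype V] (G : SimpleGraph V)
    (k : ℕ) (s t : V) :
    (∃ L S R : Finset V,
        (∀ v, v ∈ L ∨ v ∈ S ∨ v ∈ R) ∧
        Disjoint L S ∧ Disjoint L R ∧ Disjoint S R ∧
        s ∈ L ∧ t ∈ R ∧
        (∀ u ∈ L, ∀ v ∈ R, ¬ G.Adj u v) ∧
        S.card < k) ↔
    (∃ C : V → ℝ, (∀ v, 0 ≤ C v) ∧ C s = 0 ∧ C t = 0 ∧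
        (∀ p : G.Walk s t, p.IsPath → 1 ≤ (p.support.map C).sum) ∧
        ∑ v, C v ≤ (k : ℝ) - 1/2) := by
  constructor
  · rintro ⟨L, S, R, hcover, hLS, hLR, hSR, hs, ht, hadj, hcard⟩
    obtain ⟨hC0, hCs, hCt, hpath⟩ :=
      (IsVertexCut.mk hcover hLS hLR hSR hs ht hadj).isFractionalCut_indicator
    refine ⟨_, hC0, hCs, hCt, hpath, ?_⟩
    have hcard' : (S.card : ℝ) + 1 ≤ k := by exact_mod_cast hcard
    rw [Finset.sum_indicator_subset _ S.subset_univ]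
    simp only [Pi.one_apply, Finset.sum_const, nsmul_eq_mul, mul_one]
    linarith
  · rintro ⟨C, hC0, hCs, hCt, hpath, hsum⟩
    obtain ⟨L, S, R, ⟨hcover, hLS, hLR, hSR, hs, ht, hadj⟩, hcard⟩ :=
      (IsFractionalCut.mk hC0 hCs hCt hpath).exists_isVertexCut_card_lt (k := k) (by linarith)
    exact ⟨L, S, R, hcover, hLS, hLR, hSR, hs, ht, hadj, hcard⟩

/-- Let `G = (V,E)` be a finite simple undirected graph, `k > 1` an integer,
and `s t` distinct vertices. There is an `(s,t)`-vertex cut of size less than `k`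
(a partition `(L,S,R)` of `V` with `s ∈ L`, `t ∈ R` and no edge between `L` and `R`,
`|S| < k`) iff there is a fractional `(s,t)`-vertex cut of size at most `k - 1/2`
(a function `C : V → ℝ≥0` with `C s = C t = 0`, every `(s,t)`-path having `C`-length at
least `1`, and `∑ v, C v ≤ k - 1/2`). -/
theorem stmt_0 {V : Type*} [Fintype V] [DecidableEq V] (G : SimpleGraph V)
    (k : ℕ) (hk : 1 < k) (s t : V) (hst : s ≠ t) :
    (∃ L S R : Finset V,
        (∀ v, v ∈ L ∨ v ∈ S ∨ v ∈ R) ∧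
        Disjoint L S ∧ Disjoint L R ∧ Disjoint S R ∧
        s ∈ L ∧ t ∈ R ∧
        (∀ u ∈ L, ∀ v ∈ R, ¬ G.Adj u v) ∧
        S.card < k) ↔
    (∃ C : V → ℝ, (∀ v, 0 ≤ C v) ∧ C s = 0 ∧ C t = 0 ∧
        (∀ p : G.Walk s t, p.IsPath → 1 ≤ (p.support.map C).sum) ∧
        ∑ v, C v ≤ (k : ℝ) - 1/2) :=
  stmt_0_general G k s t
end

section
/- Let G = (V,E) be a finite simple undirected graph, s, t ∈ V distinct, and let C be a fractional (s,t)-vertex cut of G. Set d(v) = dist_{G,C}(s,v) (with d(v) = ∞ if v is unreachable from s). For every θ ∈ (0,1), define L_θ = {v : d(v) < θ}, S_θ = {v : θ ≤ d(v) ≤ θ + C(v)}, and R_θ = {v : d(v) - C(v) > θ} (unreachable vertices belong to R_θ). Then (L_θ, S_θ, R_θ) is a partition of V, s ∈ L_θ, t ∈ R_θ, and no edge of G joins a vertex of L_θ to a vertex of R_θ; in particular (L_θ, S_θ, R_θ) is an (s,t)-vertex cut. -/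
/-! A vertex `v` occupies the interval `[d v - C v, d v]` on the way out from `s`, and `S_θ`
consists of the vertices whose interval contains `θ`. The only graph-theoretic input is
`d v ≤ d u + C v` for every edge `uv` (extend a shortest path to `u` by `v`), so no edge jumps from
below `θ` to beyond `θ + C v`; and `s ∈ L_θ`, `t ∈ R_θ` because `d s = C s = 0` while
`d t ≥ 1 > θ`. -/

open scoped ENNReal

noncomputable def vdist {V : Type*} (G : SimpleGraph V) (C : V → ℝ) (s v : V) : ℝ≥0∞ :=
  ⨅ p : {p : G.Walk s v // p.IsPath}, ENNReal.ofReal ((p.1.support.map C).sum)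

section VertexDistance

variable {V : Type*} {G : SimpleGraph V} {C : V → ℝ}

lemma SimpleGraph.Walk.sum_map_support_nonneg (hC : ∀ v, 0 ≤ C v) {u v : V} (w : G.Walk u v) :
    0 ≤ (w.support.map C).sum :=
  List.sum_nonneg <| List.forall_mem_map.2 fun x _ => hC x

lemma SimpleGraph.Walk.sum_map_support_bypass_le [DecidableEq V] (hC : ∀ v, 0 ≤ C v) {u v : V}
    (w : G.Walk u v) : (w.bypass.support.map C).sum ≤ (w.support.map C).sum :=
  (w.support_bypass_sublist_support.map C).sum_le_sum <| List.forall_mem_map.2 fun x _ => hC x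

lemma vdist_le_of_walk (hC : ∀ v, 0 ≤ C v) {s v : V} (w : G.Walk s v) :
    vdist G C s v ≤ ENNReal.ofReal ((w.support.map C).sum) := by
  classical
  exact iInf_le_of_le ⟨w.bypass, w.bypass_isPath⟩ <|
    ENNReal.ofReal_le_ofReal (w.sum_map_support_bypass_le hC)

lemma vdist_self_le (s : V) : vdist G C s s ≤ ENNReal.ofReal (C s) :=
  iInf_le_of_le ⟨.nil, .nil⟩ (by simp)

lemma ofReal_le_vdist {s t : V} {a : ℝ}
    (h : ∀ p : G.Walk s t, p.IsPath → a ≤ (p.support.map C).sum) :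
    ENNReal.ofReal a ≤ vdist G C s t :=
  le_iInf fun p => ENNReal.ofReal_le_ofReal (h p.1 p.2)

lemma vdist_eq_top_of_not_reachable {s v : V} (h : ¬ G.Reachable s v) : vdist G C s v = ⊤ := by
  have : IsEmpty {p : G.Walk s v // p.IsPath} := ⟨fun p => h ⟨p.1⟩⟩
  exact iInf_of_empty _

lemma vdist_le_vdist_add_of_adj (hC : ∀ v, 0 ≤ C v) (s : V) {u v : V} (h : G.Adj u v) :
    vdist G C s v ≤ vdist G C s u + ENNReal.ofReal (C v) :=
  calc vdist G C s v
      ≤ ⨅ p : {p : G.Walk s u // p.IsPath},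
          ENNReal.ofReal ((p.1.support.map C).sum) + ENNReal.ofReal (C v) :=
        le_iInf fun p => (vdist_le_of_walk hC (p.1.concat h)).trans_eq <| by
          rw [SimpleGraph.Walk.support_concat, List.map_append, List.sum_append,
            List.map_singleton, List.sum_singleton,
            ENNReal.ofReal_add (p.1.sum_map_support_nonneg hC) (hC v)]
    _ = vdist G C s u + ENNReal.ofReal (C v) := ENNReal.iInf_add.symm

end VertexDistance

theorem stmt_1_general {V : Type*} (G : SimpleGraph V) (s t : V)
    (C : V → ℝ) (hC : ∀ v, 0 ≤ C v) (hCs : C s = 0) (hCt : C t = 0)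
    (hcut : ∀ p : G.Walk s t, p.IsPath → 1 ≤ (p.support.map C).sum)
    (θ : ℝ) (hθ0 : 0 < θ) (hθ1 : θ < 1) :
    let d : V → ℝ≥0∞ := fun v => vdist G C s v
    let L : Set V := {v | d v < ENNReal.ofReal θ}
    let S : Set V := {v | ENNReal.ofReal θ ≤ d v ∧ d v ≤ ENNReal.ofReal θ + ENNReal.ofReal (C v)}
    let R : Set V := {v | ENNReal.ofReal θ + ENNReal.ofReal (C v) < d v}
    (L ∪ S ∪ R = Set.univ) ∧ Disjoint L S ∧ Disjoint L R ∧ Disjoint S R ∧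
      (∀ v, ¬ G.Reachable s v → v ∈ R) ∧
      s ∈ L ∧ t ∈ R ∧ (∀ u ∈ L, ∀ v ∈ R, ¬ G.Adj u v) := by
  intro d L S R
  refine ⟨?_, ?_, ?_, ?_, ?_, ?_, ?_, ?_⟩
  · refine Set.eq_univ_of_forall fun v => ?_
    rcases lt_or_ge (d v) (ENNReal.ofReal θ) with hL | hθ
    · exact .inl (.inl hL)
    rcases le_or_gt (d v) (ENNReal.ofReal θ + ENNReal.ofReal (C v)) with hS | hR
    exacts [.inl (.inr ⟨hθ, hS⟩), .inr hR]
  · exact Set.disjoint_left.2 fun v hL hS => hS.1.not_gt hL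
  · exact Set.disjoint_left.2 fun v (hL : d v < _) (hR : _ < d v) =>
      (hL.trans_le le_self_add).not_gt hR
  · exact Set.disjoint_left.2 fun v hS hR => hS.2.not_gt hR
  · intro v hv
    simp [R, d, vdist_eq_top_of_not_reachable hv]
  · exact (vdist_self_le s).trans_lt (by simpa [hCs] using hθ0)
  · have hdt : ENNReal.ofReal 1 ≤ d t := ofReal_le_vdist hcut
    simpa [R, hCt] using (ENNReal.ofReal_lt_ofReal_iff one_pos).2 hθ1 |>.trans_le hdt
  · intro u hu v hv hadj
    have hdu : d u < ENNReal.ofReal θ := hu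
    exact hv.not_ge ((vdist_le_vdist_add_of_adj hC s hadj).trans (by gcongr))

/-- For a fractional `(s,t)`-vertex cut `C` of `G`, `d v = dist_{G,C}(s,v)`,
and any `θ ∈ (0,1)`, the triple `(L_θ, S_θ, R_θ)` with `L_θ = {d < θ}`,
`S_θ = {θ ≤ d ≤ θ + C}`, `R_θ = {d - C > θ}` (unreachable vertices belong to `R_θ`)
is a partition of `V`, `s ∈ L_θ`, `t ∈ R_θ`, and no edge joins `L_θ` to `R_θ`;
in particular it is an `(s,t)`-vertex cut. -/
theorem stmt_1 {V : Type*} [Fintype V] (G : SimpleGraph V) (s t : V) (hst : s ≠ t)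
    (C : V → ℝ) (hC : ∀ v, 0 ≤ C v) (hCs : C s = 0) (hCt : C t = 0)
    (hcut : ∀ p : G.Walk s t, p.IsPath → 1 ≤ (p.support.map C).sum)
    (θ : ℝ) (hθ0 : 0 < θ) (hθ1 : θ < 1) :
    let d : V → ℝ≥0∞ := fun v => vdist G C s v
    let L : Set V := {v | d v < ENNReal.ofReal θ}
    let S : Set V := {v | ENNReal.ofReal θ ≤ d v ∧ d v ≤ ENNReal.ofReal θ + ENNReal.ofReal (C v)}
    let R : Set V := {v | ENNReal.ofReal θ + ENNReal.ofReal (C v) < d v}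
    (L ∪ S ∪ R = Set.univ) ∧ Disjoint L S ∧ Disjoint L R ∧ Disjoint S R ∧
      (∀ v, ¬ G.Reachable s v → v ∈ R) ∧
      s ∈ L ∧ t ∈ R ∧ (∀ u ∈ L, ∀ v ∈ R, ¬ G.Adj u v) :=
  stmt_1_general G s t C hC hCs hCt hcut θ hθ0 hθ1
end

section
/- Let G = (V,E) be a finite simple undirected graph, s, t ∈ V distinct, and let C be a fractional (s,t)-vertex cut of G with d(v) = dist_{G,C}(s,v) and S_θ = {v : θ ≤ d(v) ≤ θ + C(v)}. Then for every v ∈ V the Lebesgue measure of {θ ∈ (0,1) : v ∈ S_θ} is at most C(v); consequently ∫₀¹ |S_θ| dθ ≤ Σ_{v ∈ V} C(v), and if Σ_{v ∈ V} C(v) ≤ k - 1/2 for an integer k ≥ 1 then there exists θ ∈ (0,1) with |S_θ| ≤ k - 1. -/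
open scoped ENNReal

/-- For a fractional `(s,t)`-vertex cut `C` with `d v = dist_{G,C}(s,v)` and
`S_θ = {v : θ ≤ d v ≤ θ + C v}`: for each `v`, the Lebesgue measure of
`{θ ∈ (0,1) : v ∈ S_θ}` is at most `C v`; consequently `∫₀¹ |S_θ| dθ ≤ ∑ v, C v`; and if
`∑ v, C v ≤ k - 1/2` for an integer `k ≥ 1` then some `θ ∈ (0,1)` has `|S_θ| ≤ k - 1`. -/
theorem stmt_2 {V : Type*} [Fintype V] (G : SimpleGraph V) (s t : V) (hst : s ≠ t)
    (C : V → ℝ) (hC : ∀ v, 0 ≤ C v) (hCs : C s = 0) (hCt : C t = 0)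
    (hcut : ∀ p : G.Walk s t, p.IsPath → 1 ≤ (p.support.map C).sum) :
    let d : V → ℝ≥0∞ := fun v => vdist G C s v
    let S : ℝ → Set V := fun θ =>
      {v | ENNReal.ofReal θ ≤ d v ∧ d v ≤ ENNReal.ofReal θ + ENNReal.ofReal (C v)}
    (∀ v : V, MeasureTheory.volume {θ | θ ∈ Set.Ioo (0:ℝ) 1 ∧ v ∈ S θ}
        ≤ ENNReal.ofReal (C v)) ∧
    ((∫⁻ θ in Set.Ioo (0:ℝ) 1, ((S θ).ncard : ℝ≥0∞)) ≤ ∑ v, ENNReal.ofReal (C v)) ∧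
    (∀ k : ℕ, 1 ≤ k → (∑ v, C v) ≤ (k : ℝ) - 1/2 →
        ∃ θ ∈ Set.Ioo (0:ℝ) 1, (S θ).ncard ≤ k - 1) := by
  classical
  intro d S
  have hmeas : ∀ v : V, MeasurableSet {θ : ℝ | v ∈ S θ} := by
    intro v
    have h1 : MeasurableSet {θ : ℝ | ENNReal.ofReal θ ≤ d v} :=
      measurableSet_le ENNReal.measurable_ofReal measurable_const
    have h2 : MeasurableSet {θ : ℝ | d v ≤ ENNReal.ofReal θ + ENNReal.ofReal (C v)} :=
      measurableSet_le measurable_const (ENNReal.measurable_ofReal.add measurable_const)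
    exact h1.inter h2
  have key : ∀ v : V, MeasureTheory.volume {θ | θ ∈ Set.Ioo (0:ℝ) 1 ∧ v ∈ S θ}
      ≤ ENNReal.ofReal (C v) := by
    intro v
    by_cases hv : d v = ⊤
    · have he : {θ | θ ∈ Set.Ioo (0:ℝ) 1 ∧ v ∈ S θ} = ∅ := by
        ext θ
        simp only [Set.mem_setOf_eq, Set.mem_empty_iff_false, iff_false, not_and]
        rintro _ ⟨_, h2⟩
        rw [hv, top_le_iff] at h2
        exact (ENNReal.add_lt_top.2 ⟨ENNReal.ofReal_lt_top, ENNReal.ofReal_lt_top⟩).ne h2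
      rw [he]; simp
    · set a := (d v).toReal with ha
      have hsub : {θ | θ ∈ Set.Ioo (0:ℝ) 1 ∧ v ∈ S θ} ⊆ Set.Icc (a - C v) a := by
        rintro θ ⟨⟨hθ0, _⟩, h1, h2⟩
        constructor
        · have h2' : d v ≤ ENNReal.ofReal (θ + C v) := by
            rwa [ENNReal.ofReal_add hθ0.le (hC v)]
          have := (ENNReal.le_ofReal_iff_toReal_le hv (by linarith [hC v])).1 h2'
          linarith
        · exact (ENNReal.ofReal_le_iff_le_toReal hv).1 h1
      calc MeasureTheory.volume {θ | θ ∈ Set.Ioo (0:ℝ) 1 ∧ v ∈ S θ}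
          ≤ MeasureTheory.volume (Set.Icc (a - C v) a) :=
            MeasureTheory.measure_mono hsub
        _ = ENNReal.ofReal (a - (a - C v)) := by rw [Real.volume_Icc]
        _ = ENNReal.ofReal (C v) := by ring_nf
  have hcard : ∀ θ : ℝ, ((S θ).ncard : ℝ≥0∞)
      = ∑ v : V, Set.indicator {θ : ℝ | v ∈ S θ} (fun _ => (1:ℝ≥0∞)) θ := by
    intro θ
    have h1 : (S θ).ncard = (Finset.univ.filter (fun v => v ∈ S θ)).card := by
      rw [Set.ncard_eq_toFinset_card']
      congr 1
      ext v; simp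
    rw [h1, Finset.card_filter]
    push_cast
    refine Finset.sum_congr rfl fun v _ => ?_
    rw [Set.indicator_apply]
    simp [Set.mem_setOf_eq]
  have hint : (∫⁻ θ in Set.Ioo (0:ℝ) 1, ((S θ).ncard : ℝ≥0∞))
      ≤ ∑ v, ENNReal.ofReal (C v) := by
    calc (∫⁻ θ in Set.Ioo (0:ℝ) 1, ((S θ).ncard : ℝ≥0∞))
        = ∫⁻ θ in Set.Ioo (0:ℝ) 1,
            ∑ v : V, Set.indicator {θ : ℝ | v ∈ S θ} (fun _ => (1:ℝ≥0∞)) θ := by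
          exact MeasureTheory.lintegral_congr fun θ => hcard θ
      _ = ∑ v : V, ∫⁻ θ in Set.Ioo (0:ℝ) 1,
            Set.indicator {θ : ℝ | v ∈ S θ} (fun _ => (1:ℝ≥0∞)) θ :=
          MeasureTheory.lintegral_finset_sum _
            (fun v _ => (measurable_const.indicator (hmeas v)))
      _ ≤ ∑ v, ENNReal.ofReal (C v) := by
          refine Finset.sum_le_sum fun v _ => ?_
          rw [MeasureTheory.lintegral_indicator (hmeas v),
            MeasureTheory.setLIntegral_one, MeasureTheory.Measure.restrict_apply (hmeas v)]
          refine le_trans (le_of_eq ?_) (key v)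
          congr 1
          ext θ
          simp only [Set.mem_inter_iff, Set.mem_setOf_eq]
          tauto
  refine ⟨key, hint, ?_⟩
  intro k hk hsum
  by_contra hcon
  push_neg at hcon
  have hge : ∀ θ ∈ Set.Ioo (0:ℝ) 1, (k : ℝ≥0∞) ≤ ((S θ).ncard : ℝ≥0∞) := by
    intro θ hθ
    have := hcon θ hθ
    have : k ≤ (S θ).ncard := by omega
    exact_mod_cast this
  have hlow : (k : ℝ≥0∞) ≤ ∫⁻ θ in Set.Ioo (0:ℝ) 1, ((S θ).ncard : ℝ≥0∞) := by
    have h1 : (∫⁻ _ in Set.Ioo (0:ℝ) 1, (k : ℝ≥0∞)) = (k : ℝ≥0∞) := by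
      rw [MeasureTheory.setLIntegral_const, Real.volume_Ioo]
      simp
    rw [← h1]
    exact MeasureTheory.setLIntegral_mono' measurableSet_Ioo hge
  have hup : (∑ v, ENNReal.ofReal (C v)) < (k : ℝ≥0∞) := by
    rw [← ENNReal.ofReal_sum_of_nonneg (fun v _ => hC v)]
    calc ENNReal.ofReal (∑ v, C v) ≤ ENNReal.ofReal ((k : ℝ) - 1/2) :=
          ENNReal.ofReal_le_ofReal hsum
      _ < ENNReal.ofReal (k : ℝ) := by
          refine (ENNReal.ofReal_lt_ofReal_iff ?_).2 (by linarith)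
          have : (1:ℝ) ≤ (k:ℝ) := by exact_mod_cast hk
          linarith
      _ = (k : ℝ≥0∞) := ENNReal.ofReal_natCast k
  exact absurd (le_trans hlow hint) (not_le.2 hup)
end

section
/- Let G = (V,E) be a finite simple undirected graph with n = |V|, let k ≥ 2 be an integer with n ≥ 10k - 7, and suppose (L,S,R) is a vertex cut of G with |S| ≤ k - 1 and x ∈ L. Set ε = 1/(10k) and r = ⌈400·k³·ln n⌉. Define w^{(1)}(x) = 0, w^{(1)}(u) = n³ for u ∈ N_G(x), and w^{(1)}(u) = 1 for all other u. Suppose that for each i = 1,…,r a vertex y^{(i)} ∈ R is chosen together with a simple path p^{(i)} starting at x, not containing y^{(i)}, whose last vertex is adjacent to y^{(i)} (so that p^{(i)} followed by y^{(i)} is an (x, y^{(i)})-path), and weights are updated by w^{(i+1)}(u) = (1+ε)·w^{(i)}(u) for u ∈ V(p^{(i)}) and w^{(i+1)}(u) = w^{(i)}(u) otherwise. Then there exists an iteration i ∈ {1,…,r} such that w^{(i)}(p^{(i)}) ≥ (1/(k - 0.6)) · Σ_{v ∈ V∖{y^{(i)}}, w^{(i)}(v) ≠ 1} w^{(i)}(v),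 where w^{(i)}(p^{(i)}) = Σ_{v ∈ V(p^{(i)})} w^{(i)}(v). -/
open scoped Classical

private lemma cross_aux {V : Type*} {G : SimpleGraph V} {L S R : Finset V}
    (hpart : ∀ v, v ∈ L ∨ v ∈ S ∨ v ∈ R)
    (hcut : ∀ u ∈ L, ∀ v ∈ R, ¬ G.Adj u v) :
    ∀ {a b : V} (q : G.Walk a b), a ∈ L → b ∉ L → ∃ s ∈ S, s ∈ q.support := by
  intro a b q
  induction q with
  | nil => intro ha hb; exact absurd ha hb
  | @cons u v c h q ih =>
    intro ha hb
    rcases hpart v with hv | hv | hv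
    · obtain ⟨s, hs, hs'⟩ := ih hv hb
      exact ⟨s, hs, by simp [SimpleGraph.Walk.support_cons, hs']⟩
    · exact ⟨v, hv, by simp [SimpleGraph.Walk.support_cons]⟩
    · exact absurd h (hcut u ha v hv)

set_option maxHeartbeats 2000000 in
/-- multiplicative weight updates, local version. Let `G` be a finite simple
graph on `n` vertices, `k ≥ 2` with `n ≥ 10k - 7`, and `(L,S,R)` a vertex cut with
`|S| ≤ k - 1` and `x ∈ L`. Set `ε = 1/(10k)`, `r = ⌈400 k³ ln n⌉`, and initialize
`w⁽¹⁾(x) = 0`, `w⁽¹⁾(u) = n³` for neighbors `u` of `x`, `w⁽¹⁾(u) = 1` otherwise. If in each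
iteration `i = 1,…,r` a vertex `y⁽ⁱ⁾ ∈ R` and a simple path `p⁽ⁱ⁾` from `x` avoiding `y⁽ⁱ⁾`
whose endpoint is adjacent to `y⁽ⁱ⁾` are chosen, and the weights of the vertices of `p⁽ⁱ⁾`
are multiplied by `(1+ε)`, then some iteration `i` satisfies
`w⁽ⁱ⁾(p⁽ⁱ⁾) ≥ (1/(k-0.6)) ∑_{v ≠ y⁽ⁱ⁾, w⁽ⁱ⁾(v) ≠ 1} w⁽ⁱ⁾(v)`. -/
theorem stmt_5 {V : Type*} [Fintype V] [DecidableEq V] (G : SimpleGraph V)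
    [DecidableRel G.Adj]
    (n : ℕ) (hn : n = Fintype.card V)
    (k : ℕ) (hk : 2 ≤ k) (hnk : 10 * k - 7 ≤ n)
    (L S R : Finset V)
    (hpart : ∀ v, v ∈ L ∨ v ∈ S ∨ v ∈ R)
    (hLS : Disjoint L S) (hLR : Disjoint L R) (hSR : Disjoint S R)
    (hLne : L.Nonempty) (hRne : R.Nonempty)
    (hcut : ∀ u ∈ L, ∀ v ∈ R, ¬ G.Adj u v)
    (hS : S.card ≤ k - 1)
    (x : V) (hx : x ∈ L)
    (ε : ℝ) (hε : ε = 1 / (10 * (k : ℝ)))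
    (r : ℕ) (hr : r = ⌈400 * (k : ℝ) ^ 3 * Real.log n⌉₊)
    (y : ℕ → V) (z : ℕ → V) (p : ∀ i : ℕ, G.Walk x (z i))
    (hy : ∀ i, 1 ≤ i → i ≤ r → y i ∈ R)
    (hp : ∀ i, 1 ≤ i → i ≤ r →
      (p i).IsPath ∧ y i ∉ (p i).support ∧ G.Adj (z i) (y i))
    (w : ℕ → V → ℝ)
    (hw1x : w 1 x = 0)
    (hw1N : ∀ u ∈ G.neighborFinset x, w 1 u = (n : ℝ) ^ 3)
    (hw1o : ∀ u, u ≠ x → u ∉ G.neighborFinset x → w 1 u = 1)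
    (hupd : ∀ i, 1 ≤ i → i ≤ r → ∀ u,
      w (i + 1) u = if u ∈ (p i).support then (1 + ε) * w i u else w i u) :
    ∃ i, 1 ≤ i ∧ i ≤ r ∧
      ((p i).support.map (w i)).sum ≥
        (1 / ((k : ℝ) - 0.6)) *
          ∑ v ∈ Finset.univ.filter (fun v => v ≠ y i ∧ w i v ≠ 1), w i v := by
  by_contra hcon
  push_neg at hcon
  -- basic numerics
  have hk2 : (2:ℝ) ≤ (k:ℝ) := by exact_mod_cast hk
  have hn13 : 13 ≤ n := by omega
  have hN13 : (13:ℝ) ≤ (n:ℝ) := by exact_mod_cast hn13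
  have hKpos : (0:ℝ) < k := by linarith
  have hεpos : 0 < ε := by rw [hε]; positivity
  have hεle : ε ≤ 1/20 := by
    rw [hε]
    rw [div_le_div_iff₀ (by positivity) (by norm_num)]
    linarith
  have hk06 : (0:ℝ) < (k:ℝ) - 0.6 := by norm_num; linarith
  have hlog : 0 < Real.log n := Real.log_pos (by linarith)
  have hrlb : 400*(k:ℝ)^3*Real.log n ≤ (r:ℝ) := by rw [hr]; exact Nat.le_ceil _
  have hr1 : 1 ≤ r := by
    rw [hr]
    exact Nat.one_le_iff_ne_zero.mpr (by
      simp only [ne_eq, Nat.ceil_eq_zero, not_le]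
      positivity)
  -- weights are 0 or ≥ 1
  have hw01 : ∀ i, 1 ≤ i → i ≤ r + 1 → ∀ v, w i v = 0 ∨ 1 ≤ w i v := by
    intro i hi
    induction i, hi using Nat.le_induction with
    | base =>
      intro _ v
      by_cases hvx : v = x
      · left; rw [hvx, hw1x]
      · by_cases hvN : v ∈ G.neighborFinset x
        · right; rw [hw1N v hvN]
          have h1n : (1:ℝ) ≤ (n:ℝ) := by linarith
          exact one_le_pow₀ h1n
        · right; rw [hw1o v hvx hvN]
    | succ i hi ih =>
      intro hir v
      rw [hupd i hi (by omega) v]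
      split
      · rcases ih (by omega) v with h0 | h1
        · left; rw [h0]; ring
        · right; nlinarith
      · exact ih (by omega) v
  have hwnn : ∀ i, 1 ≤ i → i ≤ r + 1 → ∀ v, 0 ≤ w i v := by
    intro i h1 h2 v
    rcases hw01 i h1 h2 v with h | h
    · rw [h]
    · linarith
  -- marked sets and potential
  set M : ℕ → Finset V := fun i => Finset.univ.filter (fun v => w i v ≠ 1) with hM
  set Ψ : ℕ → ℝ := fun i => ∑ v ∈ M i, w i v with hΨ
  have hMsub : ∀ i, 1 ≤ i → i ≤ r → M i ⊆ M (i+1) := by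
    intro i h1 h2 v hv
    simp only [hM, Finset.mem_filter, Finset.mem_univ, true_and] at hv ⊢
    rw [hupd i h1 h2 v]
    split
    · rcases hw01 i h1 (by omega) v with h0 | hge
      · rw [h0]; norm_num
      · have : 1 < w i v := lt_of_le_of_ne hge (Ne.symm hv)
        have : 1 < (1+ε) * w i v := by nlinarith
        exact ne_of_gt this
    · exact hv
  -- every path hits S
  have hScross : ∀ i, 1 ≤ i → i ≤ r → ∃ s ∈ S, s ∈ (p i).support := by
    intro i h1 h2
    have hzL : z i ∉ L := fun hzL => hcut (z i) hzL (y i) (hy i h1 h2) ((hp i h1 h2).2.2)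
    exact cross_aux hpart hcut (p i) hx hzL
  -- pigeonhole : a vertex s ∈ S on many paths
  obtain ⟨s, hsS, hrc⟩ : ∃ s ∈ S, r ≤ (k-1) * ((Finset.Icc 1 r).filter
      (fun i => s ∈ (p i).support)).card := by
    have hSne : S.Nonempty := by
      obtain ⟨s, hs, _⟩ := hScross 1 le_rfl hr1
      exact ⟨s, hs⟩
    obtain ⟨s, hsS, hseq⟩ := Finset.exists_mem_eq_sup S hSne
      (fun s => ((Finset.Icc 1 r).filter (fun i => s ∈ (p i).support)).card)
    refine ⟨s, hsS, ?_⟩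
    have hsub : Finset.Icc 1 r ⊆
        S.biUnion (fun t => (Finset.Icc 1 r).filter (fun i => t ∈ (p i).support)) := by
      intro i hi
      rw [Finset.mem_Icc] at hi
      obtain ⟨t, ht, ht'⟩ := hScross i hi.1 hi.2
      exact Finset.mem_biUnion.mpr ⟨t, ht, Finset.mem_filter.mpr ⟨Finset.mem_Icc.mpr hi, ht'⟩⟩
    have h1 : r ≤ ∑ t ∈ S, ((Finset.Icc 1 r).filter (fun i => t ∈ (p i).support)).card := by
      calc r = (Finset.Icc 1 r).card := by rw [Nat.card_Icc]; omega
        _ ≤ _ := le_trans (Finset.card_le_card hsub) (Finset.card_biUnion_le)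
    have h2 : ∑ t ∈ S, ((Finset.Icc 1 r).filter (fun i => t ∈ (p i).support)).card ≤
        S.card * ((Finset.Icc 1 r).filter (fun i => s ∈ (p i).support)).card := by
      have := Finset.sum_le_card_nsmul S
        (fun t => ((Finset.Icc 1 r).filter (fun i => t ∈ (p i).support)).card)
        (((Finset.Icc 1 r).filter (fun i => s ∈ (p i).support)).card)
        (fun t ht => by
          rw [← hseq]
          exact Finset.le_sup (f := fun t => ((Finset.Icc 1 r).filter
            (fun i => t ∈ (p i).support)).card) ht)
      simpa using this
    calc r ≤ _ := h1
      _ ≤ _ := h2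
      _ ≤ _ := Nat.mul_le_mul_right _ hS
  set c : ℕ := ((Finset.Icc 1 r).filter (fun i => s ∈ (p i).support)).card with hc
  have hc1 : 1 ≤ c := by
    rcases Nat.eq_zero_or_pos c with h | h
    · rw [h] at hrc; omega
    · exact h
  -- growth of w at s
  have hgrow : ∀ m, m ≤ r →
      (1+ε)^(((Finset.Icc 1 m).filter (fun i => s ∈ (p i).support)).card) ≤ w (m+1) s := by
    intro m
    induction m with
    | zero =>
      intro _
      simp only [show Finset.Icc 1 0 = ∅ from rfl, Finset.filter_empty, Finset.card_empty,
        pow_zero]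
      have hsx : s ≠ x := fun h => (Finset.disjoint_left.mp hLS) hx (h ▸ hsS)
      by_cases hvN : s ∈ G.neighborFinset x
      · rw [hw1N s hvN]
        have h1n : (1:ℝ) ≤ (n:ℝ) := by linarith
        exact one_le_pow₀ h1n
      · rw [hw1o s hsx hvN]
    | succ m ih =>
      intro h
      have h' : m ≤ r := by omega
      have hins : Finset.Icc 1 (m+1) = insert (m+1) (Finset.Icc 1 m) := by
        rw [← Finset.insert_Icc_right_eq_Icc_add_one (by omega)]
      rw [hins, Finset.filter_insert, hupd (m+1) (by omega) h s]
      by_cases hin : s ∈ (p (m+1)).support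
      · rw [if_pos hin, if_pos hin]
        rw [Finset.card_insert_of_notMem (by simp)]
        rw [pow_succ]
        have := ih h'
        have h1ε : (0:ℝ) < 1 + ε := by linarith
        calc (1+ε)^(((Finset.Icc 1 m).filter (fun i => s ∈ (p i).support)).card) * (1+ε)
            ≤ w (m+1) s * (1+ε) := by
              exact mul_le_mul_of_nonneg_right this (le_of_lt h1ε)
          _ = (1+ε) * w (m+1) s := by ring
      · rw [if_neg hin, if_neg hin]
        exact ih h'
  -- lower bound on Ψ (r+1)
  have hΨlb : (1+ε)^c ≤ Ψ (r+1) := by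
    have hws : (1+ε)^c ≤ w (r+1) s := hgrow r le_rfl
    have hsM : s ∈ M (r+1) := by
      simp only [hM, Finset.mem_filter, Finset.mem_univ, true_and]
      have h1 : (1:ℝ) < 1+ε := by linarith
      have h2 : (1:ℝ) < (1+ε)^c := one_lt_pow₀ h1 (by omega)
      exact ne_of_gt (lt_of_lt_of_le h2 hws)
    calc (1+ε)^c ≤ w (r+1) s := hws
      _ ≤ Ψ (r+1) := Finset.single_le_sum
          (fun v _ => hwnn (r+1) (by omega) le_rfl v) hsM
  -- recurrence
  have hrec : ∀ i, 1 ≤ i → i ≤ r →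
      Ψ (i+1) ≤ (1 + ε/((k:ℝ)-0.6)) * Ψ i + (1+ε) * (((M (i+1)).card : ℝ) - (M i).card) := by
    intro i h1 h2
    have hnn : ∀ v, 0 ≤ w i v := hwnn i h1 (by omega)
    have hnn' : ∀ v, 0 ≤ w (i+1) v := hwnn (i+1) (by omega) (by omega)
    have hsplit : Ψ (i+1) = (∑ v ∈ M (i+1) ∩ M i, w (i+1) v) +
        (∑ v ∈ M (i+1) \ M i, w (i+1) v) :=
      (Finset.sum_inter_add_sum_sdiff (M (i+1)) (M i) _).symm
    have hBA : ∑ v ∈ M (i+1) ∩ M i, w (i+1) v ≤ ∑ v ∈ M i, w (i+1) v :=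
      Finset.sum_le_sum_of_subset_of_nonneg Finset.inter_subset_right (fun v _ _ => hnn' v)
    have hAexp : ∑ v ∈ M i, w (i+1) v
        = Ψ i + ε * ∑ v ∈ (M i).filter (fun v => v ∈ (p i).support), w i v := by
      have he : ∀ v ∈ M i, w (i+1) v
          = w i v + (if v ∈ (p i).support then ε * w i v else 0) := by
        intro v _
        rw [hupd i h1 h2 v]
        split <;> ring
      rw [Finset.sum_congr rfl he, Finset.sum_add_distrib, ← Finset.sum_filter,
        Finset.mul_sum]
    have hAP : ∑ v ∈ (M i).filter (fun v => v ∈ (p i).support), w i v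
        ≤ ∑ v ∈ (p i).support.toFinset, w i v := by
      refine Finset.sum_le_sum_of_subset_of_nonneg ?_ (fun v _ _ => hnn v)
      intro v hv
      rw [List.mem_toFinset]
      exact (Finset.mem_filter.mp hv).2
    have hPsum : ∑ v ∈ (p i).support.toFinset, w i v = ((p i).support.map (w i)).sum :=
      List.sum_toFinset _ ((hp i h1 h2).1.support_nodup)
    have hΦΨ : ∑ v ∈ Finset.univ.filter (fun v => v ≠ y i ∧ w i v ≠ 1), w i v ≤ Ψ i := by
      refine Finset.sum_le_sum_of_subset_of_nonneg ?_ (fun v _ _ => hnn v)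
      intro v hv
      simp only [hM, Finset.mem_filter, Finset.mem_univ, true_and] at hv ⊢
      exact hv.2
    have hΦ := hcon i h1 h2
    have hΨnn : 0 ≤ Ψ i := Finset.sum_nonneg (fun v _ => hnn v)
    have hεstep : ε * ∑ v ∈ (M i).filter (fun v => v ∈ (p i).support), w i v
        ≤ ε/((k:ℝ)-0.6) * Ψ i := by
      have h3 : ∑ v ∈ (M i).filter (fun v => v ∈ (p i).support), w i v
          ≤ (1/((k:ℝ)-0.6)) * Ψ i := by
        have h4 : (1/((k:ℝ)-0.6)) * ∑ v ∈ Finset.univ.filter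
            (fun v => v ≠ y i ∧ w i v ≠ 1), w i v ≤ (1/((k:ℝ)-0.6)) * Ψ i :=
          mul_le_mul_of_nonneg_left hΦΨ (by positivity)
        calc ∑ v ∈ (M i).filter (fun v => v ∈ (p i).support), w i v
            ≤ ((p i).support.map (w i)).sum := hPsum ▸ hAP
          _ ≤ _ := le_of_lt hΦ
          _ ≤ _ := h4
      calc ε * ∑ v ∈ (M i).filter (fun v => v ∈ (p i).support), w i v
          ≤ ε * ((1/((k:ℝ)-0.6)) * Ψ i) := mul_le_mul_of_nonneg_left h3 (le_of_lt hεpos)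
        _ = ε/((k:ℝ)-0.6) * Ψ i := by ring
    have hdiff : ∑ v ∈ M (i+1) \ M i, w (i+1) v = (1+ε) * ((M (i+1) \ M i).card : ℝ) := by
      have he : ∀ v ∈ M (i+1) \ M i, w (i+1) v = 1 + ε := by
        intro v hv
        obtain ⟨hvB, hvA⟩ := Finset.mem_sdiff.mp hv
        simp only [hM, Finset.mem_filter, Finset.mem_univ, true_and] at hvB hvA
        rw [not_not] at hvA
        by_cases hin : v ∈ (p i).support
        · rw [hupd i h1 h2 v, if_pos hin, hvA]; ring
        · exfalso
          apply hvB
          rw [hupd i h1 h2 v, if_neg hin, hvA]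
      rw [Finset.sum_congr rfl he, Finset.sum_const, nsmul_eq_mul, mul_comm]
    have hcardd : ((M (i+1) \ M i).card : ℝ) = ((M (i+1)).card : ℝ) - (M i).card := by
      rw [Finset.card_sdiff_of_subset (hMsub i h1 h2)]
      rw [Nat.cast_sub (Finset.card_le_card (hMsub i h1 h2))]
    rw [hsplit, hdiff, hcardd]
    have := le_trans hBA (le_of_eq hAexp)
    linarith
  -- telescope
  have hcard : ∀ m, m ≤ r → (M 1).card ≤ (M (m+1)).card := by
    intro m
    induction m with
    | zero => intro _; exact le_rfl
    | succ m ih =>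
      intro h
      exact le_trans (ih (by omega)) (Finset.card_le_card (hMsub (m+1) (by omega) h))
  have htel : ∀ m, m ≤ r → Ψ (m+1) ≤ (1 + ε/((k:ℝ)-0.6))^m *
      (Ψ 1 + (1+ε) * (((M (m+1)).card : ℝ) - (M 1).card)) := by
    intro m
    induction m with
    | zero => intro _; simp
    | succ m ih =>
      intro h
      have h' : m ≤ r := by omega
      have hrec' := hrec (m+1) (by omega) h
      have hih := ih h'
      set a : ℝ := ε/((k:ℝ)-0.6) with hadef
      set d0 : ℝ := ((M 1).card : ℝ) with hd0def
      set d1 : ℝ := ((M (m+1)).card : ℝ) with hd1def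
      set d2 : ℝ := ((M (m+1+1)).card : ℝ) with hd2def
      set q : ℝ := Ψ 1 with hqdef
      have ha : 0 ≤ a := by rw [hadef]; positivity
      have hpow1 : (1:ℝ) ≤ (1+a)^(m+1) := one_le_pow₀ (by linarith)
      have hd1 : d1 ≤ d2 := by
        rw [hd1def, hd2def]
        exact_mod_cast Finset.card_le_card (hMsub (m+1) (by omega) h)
      have hd0 : d0 ≤ d1 := by
        rw [hd0def, hd1def]
        exact_mod_cast hcard m h'
      have step1 : (1+a) * Ψ (m+1) ≤ (1+a)^(m+1) * (q + (1+ε) * (d1 - d0)) := by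
        calc (1+a) * Ψ (m+1)
            ≤ (1+a) * ((1+a)^m * (q + (1+ε) * (d1 - d0))) :=
              mul_le_mul_of_nonneg_left hih (by linarith)
          _ = _ := by ring
      have hE : (1+ε) * (d2 - d1) ≤ (1+a)^(m+1) * ((1+ε) * (d2 - d1)) :=
        le_mul_of_one_le_left (mul_nonneg (by linarith) (by linarith)) hpow1
      have hdistr : (1+a)^(m+1) * (q + (1+ε) * (d2 - d0))
          = (1+a)^(m+1) * (q + (1+ε) * (d1 - d0))
          + (1+a)^(m+1) * ((1+ε) * (d2 - d1)) := by ring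
      linarith
  have hΨ1 : Ψ 1 ≤ (n:ℝ)^4 := by
    have hterm : ∀ v ∈ M 1, w 1 v ≤ (n:ℝ)^3 := by
      intro v _
      have hn3 : (1:ℝ) ≤ (n:ℝ)^3 := one_le_pow₀ (by linarith)
      by_cases hvx : v = x
      · rw [hvx, hw1x]; linarith
      · by_cases hvN : v ∈ G.neighborFinset x
        · rw [hw1N v hvN]
        · rw [hw1o v hvx hvN]; linarith
    have hcard1 : ((M 1).card : ℝ) ≤ (n:ℝ) := by
      have : (M 1).card ≤ n := by
        rw [hn, ← Finset.card_univ]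
        exact Finset.card_le_univ _
      exact_mod_cast this
    have hn3 : (0:ℝ) ≤ (n:ℝ)^3 := by positivity
    calc Ψ 1 ≤ ∑ _v ∈ M 1, (n:ℝ)^3 := Finset.sum_le_sum hterm
      _ = ((M 1).card : ℝ) * (n:ℝ)^3 := by rw [Finset.sum_const, nsmul_eq_mul]
      _ ≤ (n:ℝ) * (n:ℝ)^3 := mul_le_mul_of_nonneg_right hcard1 hn3
      _ = (n:ℝ)^4 := by ring
  -- combine
  have hMle : ((M (r+1)).card : ℝ) - (M 1).card ≤ (n:ℝ) := by
    have h1 : (M (r+1)).card ≤ Fintype.card V := Finset.card_le_univ _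
    have h2 : (0:ℝ) ≤ ((M 1).card : ℝ) := by positivity
    have : ((M (r+1)).card : ℝ) ≤ (n:ℝ) := by rw [hn]; exact_mod_cast h1
    linarith
  have hfin : (1+ε)^c ≤ (1 + ε/((k:ℝ)-0.6))^r * ((n:ℝ)^4 + (1+ε)*(n:ℝ)) := by
    have h1 := htel r le_rfl
    have h2 : (0:ℝ) < (1 + ε/((k:ℝ)-0.6))^r := by positivity
    have h3 : Ψ 1 + (1+ε) * (((M (r+1)).card : ℝ) - (M 1).card) ≤ (n:ℝ)^4 + (1+ε)*(n:ℝ) := by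
      have := mul_le_mul_of_nonneg_left hMle (by linarith : (0:ℝ) ≤ 1+ε)
      linarith
    calc (1+ε)^c ≤ Ψ (r+1) := hΨlb
      _ ≤ _ := h1
      _ ≤ _ := mul_le_mul_of_nonneg_left h3 (le_of_lt h2)
  -- take logs and derive contradiction
  have hXpos : (0:ℝ) < (n:ℝ)^4 + (1+ε)*(n:ℝ) := by positivity
  have hL1 : (c:ℝ) * Real.log (1+ε) ≤ (r:ℝ) * Real.log (1 + ε/((k:ℝ)-0.6))
      + Real.log ((n:ℝ)^4 + (1+ε)*(n:ℝ)) := by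
    have hlogle := Real.log_le_log (by positivity : (0:ℝ) < (1+ε)^c) hfin
    rwa [Real.log_pow, Real.log_mul (by positivity) (ne_of_gt hXpos), Real.log_pow] at hlogle
  have hL2 : Real.log ((n:ℝ)^4 + (1+ε)*(n:ℝ)) ≤ 5 * Real.log n := by
    have hX : (n:ℝ)^4 + (1+ε)*(n:ℝ) ≤ (n:ℝ)^5 := by
      have hnpos : (0:ℝ) < (n:ℝ) := by linarith
      have h4 : (1+ε)*(n:ℝ) ≤ 2*(n:ℝ) := mul_le_mul_of_nonneg_right (by linarith) hnpos.le
      have h5 : (n:ℝ) ≤ (n:ℝ)^4 := le_self_pow₀ (by linarith) (by norm_num)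
      have h3 : (n:ℝ)^4*12 ≤ (n:ℝ)^4*((n:ℝ)-1) :=
        mul_le_mul_of_nonneg_left (by linarith) (by positivity)
      have h6 : (n:ℝ)^4*((n:ℝ)-1) = (n:ℝ)^5 - (n:ℝ)^4 := by ring
      linarith
    calc Real.log ((n:ℝ)^4 + (1+ε)*(n:ℝ)) ≤ Real.log ((n:ℝ)^5) :=
        Real.log_le_log hXpos hX
      _ = 5 * Real.log n := by rw [Real.log_pow]; norm_num
  have hla : Real.log (1 + ε/((k:ℝ)-0.6)) ≤ ε/((k:ℝ)-0.6) := by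
    have := Real.log_le_sub_one_of_pos (show (0:ℝ) < 1 + ε/((k:ℝ)-0.6) by positivity)
    linarith
  have hle : ε - ε^2 ≤ Real.log (1+ε) := by
    have hinv : 1 - (1+ε)⁻¹ ≤ Real.log (1+ε) := by
      have h1 := Real.log_le_sub_one_of_pos (show (0:ℝ) < (1+ε)⁻¹ by positivity)
      rw [Real.log_inv] at h1
      linarith
    have h2 : (1+ε)⁻¹ ≤ 1 - ε + ε^2 := by
      rw [inv_eq_one_div, div_le_iff₀ (by linarith)]
      nlinarith [hεpos]
    linarith
  have hCnn : (0:ℝ) ≤ (c:ℝ) := Nat.cast_nonneg c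
  have hkey : (c:ℝ)*(ε-ε^2) ≤ (r:ℝ)*(ε/((k:ℝ)-0.6)) + 5*Real.log n := by
    have hs1 : (c:ℝ)*(ε-ε^2) ≤ (c:ℝ)*Real.log (1+ε) := mul_le_mul_of_nonneg_left hle hCnn
    have hs2 : (r:ℝ)*Real.log (1 + ε/((k:ℝ)-0.6)) ≤ (r:ℝ)*(ε/((k:ℝ)-0.6)) :=
      mul_le_mul_of_nonneg_left hla (Nat.cast_nonneg r)
    linarith
  have hC : (r:ℝ) ≤ ((k:ℝ)-1) * (c:ℝ) := by
    have h1 : ((r:ℕ):ℝ) ≤ (((k-1) * c : ℕ):ℝ) := Nat.cast_le.mpr hrc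
    rwa [Nat.cast_mul, Nat.cast_sub (by omega : 1 ≤ k), Nat.cast_one] at h1
  have hεK : ε * (10*(k:ℝ)) = 1 := by rw [hε]; field_simp
  have h4 : ε * ((k:ℝ) - 0.6) ≤ 1/10 := by nlinarith [hεK, hεpos]
  have ha' : (ε/((k:ℝ)-0.6))*((k:ℝ)-0.6) = ε := div_mul_cancel₀ ε (ne_of_gt hk06)
  have hkey2 : (c:ℝ)*(ε-ε^2)*((k:ℝ)-0.6) ≤ (r:ℝ)*ε + 5*Real.log n*((k:ℝ)-0.6) := by
    have hm := mul_le_mul_of_nonneg_right hkey (le_of_lt hk06)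
    calc (c:ℝ)*(ε-ε^2)*((k:ℝ)-0.6)
        ≤ ((r:ℝ)*(ε/((k:ℝ)-0.6)) + 5*Real.log n)*((k:ℝ)-0.6) := hm
      _ = (r:ℝ)*((ε/((k:ℝ)-0.6))*((k:ℝ)-0.6)) + 5*Real.log n*((k:ℝ)-0.6) := by ring
      _ = (r:ℝ)*ε + 5*Real.log n*((k:ℝ)-0.6) := by rw [ha']
  have hee : (0:ℝ) ≤ ε - ε^2 := by nlinarith [hεpos, hεle]
  have hm2 : (r:ℝ)*((ε-ε^2)*((k:ℝ)-0.6)) ≤ ((k:ℝ)-1)*((c:ℝ)*((ε-ε^2)*((k:ℝ)-0.6))) := by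
    have := mul_le_mul_of_nonneg_right hC (mul_nonneg hee (le_of_lt hk06))
    calc (r:ℝ)*((ε-ε^2)*((k:ℝ)-0.6)) ≤ (((k:ℝ)-1)*(c:ℝ))*((ε-ε^2)*((k:ℝ)-0.6)) := this
      _ = ((k:ℝ)-1)*((c:ℝ)*((ε-ε^2)*((k:ℝ)-0.6))) := by ring
  have hm3 : ((k:ℝ)-1)*((c:ℝ)*(ε-ε^2)*((k:ℝ)-0.6))
      ≤ ((k:ℝ)-1)*((r:ℝ)*ε + 5*Real.log n*((k:ℝ)-0.6)) :=
    mul_le_mul_of_nonneg_left hkey2 (by linarith)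
  have hRε : 40*(k:ℝ)^2*Real.log n ≤ (r:ℝ)*ε := by
    have h5 := mul_le_mul_of_nonneg_right hrlb (le_of_lt hεpos)
    have h6 : 400*(k:ℝ)^3*Real.log n*ε = 40*(k:ℝ)^2*Real.log n * (ε*(10*(k:ℝ))) := by ring
    rw [h6, hεK, mul_one] at h5
    exact h5
  have hRεnn : (0:ℝ) ≤ (r:ℝ)*ε := by positivity
  have hKLpos : (0:ℝ) < (k:ℝ)^2*Real.log n := by positivity
  nlinarith [hm2, hm3, hRε, h4, hlog, hk2, hRεnn, hKLpos,
    mul_le_mul_of_nonneg_left h4 hRεnn]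
end

section
/- Let G = (V,E) be a finite simple undirected graph with m = |E| edges, and let (L,S,R) be a vertex cut of G (a partition of V with L, R nonempty and no edges between L and R) such that deg_G(L) ≤ deg_G(R). Then 2m ≤ 4·deg_G(R) + |S|·(|S|-1); in particular, deg_G(R) ≥ m/2 - |S|·(|S|-1)/4. -/
/-- Let `G` be a finite simple graph with `m` edges and `(L,S,R)` a vertex cut
with `deg_G(L) ≤ deg_G(R)`. Then `2m ≤ 4·deg_G(R) + |S|(|S|-1)`; in particular
`deg_G(R) ≥ m/2 - |S|(|S|-1)/4`. -/
theorem stmt_6 {V : Type*} [Fintype V] [DecidableEq V] (G : SimpleGraph V)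
    [DecidableRel G.Adj]
    (m : ℕ) (hm : m = G.edgeFinset.card)
    (L S R : Finset V)
    (hpart : ∀ v, v ∈ L ∨ v ∈ S ∨ v ∈ R)
    (hLS : Disjoint L S) (hLR : Disjoint L R) (hSR : Disjoint S R)
    (hLne : L.Nonempty) (hRne : R.Nonempty)
    (hcut : ∀ u ∈ L, ∀ v ∈ R, ¬ G.Adj u v)
    (hdeg : ∑ v ∈ L, G.degree v ≤ ∑ v ∈ R, G.degree v) :
    2 * m ≤ 4 * (∑ v ∈ R, G.degree v) + S.card * (S.card - 1) ∧
      (m : ℝ) / 2 - (S.card : ℝ) * ((S.card : ℝ) - 1) / 4 ≤ (∑ v ∈ R, G.degree v : ℕ) := by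
  classical
  set DL := ∑ v ∈ L, G.degree v with hDL
  set DS := ∑ v ∈ S, G.degree v with hDS
  set DR := ∑ v ∈ R, G.degree v with hDR
  have huniv : (Finset.univ : Finset V) = L ∪ (S ∪ R) := by
    ext v
    simpa using hpart v
  have hdisj1 : Disjoint L (S ∪ R) := Finset.disjoint_union_right.mpr ⟨hLS, hLR⟩
  -- handshake
  have hhand : 2 * m = DL + (DS + DR) := by
    rw [hm, ← SimpleGraph.sum_degrees_eq_twice_card_edges, huniv,
      Finset.sum_union hdisj1, Finset.sum_union hSR]
  -- degree splits over the partition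
  have hfilt : ∀ (A : Finset V) (v : V), (A.filter (G.Adj v)).card ≤ G.degree v := by
    intro A v
    rw [← SimpleGraph.card_neighborFinset_eq_degree]
    apply Finset.card_le_card
    intro u hu
    simp only [Finset.mem_filter] at hu
    simp [SimpleGraph.mem_neighborFinset, hu.2]
  have hdeg_split : ∀ v, G.degree v =
      (L.filter (G.Adj v)).card + ((S.filter (G.Adj v)).card + (R.filter (G.Adj v)).card) := by
    intro v
    rw [← SimpleGraph.card_neighborFinset_eq_degree]
    have hnb : G.neighborFinset v = Finset.univ.filter (G.Adj v) := by
      ext u; simp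
    have d1 : Disjoint (L.filter (G.Adj v)) (S.filter (G.Adj v) ∪ R.filter (G.Adj v)) := by
      rw [← Finset.filter_union]
      exact Finset.disjoint_filter_filter hdisj1
    rw [hnb, huniv, Finset.filter_union, Finset.filter_union,
      Finset.card_union_of_disjoint d1,
      Finset.card_union_of_disjoint (Finset.disjoint_filter_filter hSR)]
  -- symmetry of edge counting between two sets
  have hsym : ∀ (A B : Finset V),
      ∑ v ∈ A, (B.filter (G.Adj v)).card = ∑ v ∈ B, (A.filter (G.Adj v)).card := by
    intro A B
    have h : ∀ (C : Finset V) (v : V),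
        (C.filter (G.Adj v)).card = ∑ u ∈ C, if G.Adj v u then 1 else 0 := by
      intro C v; rw [Finset.card_filter]
    simp only [h]
    rw [Finset.sum_comm]
    apply Finset.sum_congr rfl
    intro u _
    apply Finset.sum_congr rfl
    intro v _
    simp [SimpleGraph.adj_comm]
  -- bound on DS
  have hSS : ∑ v ∈ S, (S.filter (G.Adj v)).card ≤ S.card * (S.card - 1) := by
    calc ∑ v ∈ S, (S.filter (G.Adj v)).card ≤ ∑ _v ∈ S, (S.card - 1) := by
          apply Finset.sum_le_sum
          intro v hv
          have hsub : S.filter (G.Adj v) ⊆ S.erase v := by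
            intro u hu
            simp only [Finset.mem_filter] at hu
            exact Finset.mem_erase.mpr ⟨(G.ne_of_adj hu.2).symm, hu.1⟩
          calc (S.filter (G.Adj v)).card ≤ (S.erase v).card := Finset.card_le_card hsub
            _ = S.card - 1 := Finset.card_erase_of_mem hv
      _ = S.card * (S.card - 1) := by rw [Finset.sum_const, smul_eq_mul]
  have hSL : ∑ v ∈ S, (L.filter (G.Adj v)).card ≤ DL := by
    rw [hsym S L]
    exact Finset.sum_le_sum fun v _ => hfilt S v
  have hSR' : ∑ v ∈ S, (R.filter (G.Adj v)).card ≤ DR := by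
    rw [hsym S R]
    exact Finset.sum_le_sum fun v _ => hfilt S v
  have hDSbound : DS ≤ DL + (S.card * (S.card - 1) + DR) := by
    have : DS = ∑ v ∈ S, (L.filter (G.Adj v)).card +
        (∑ v ∈ S, (S.filter (G.Adj v)).card + ∑ v ∈ S, (R.filter (G.Adj v)).card) := by
      rw [hDS]
      rw [Finset.sum_congr rfl fun v _ => hdeg_split v]
      rw [Finset.sum_add_distrib, Finset.sum_add_distrib]
    rw [this]
    exact Nat.add_le_add hSL (Nat.add_le_add hSS hSR')
  have hmain : 2 * m ≤ 4 * DR + S.card * (S.card - 1) := by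
    rw [hhand]
    calc DL + (DS + DR) ≤ DR + ((DR + (S.card * (S.card - 1) + DR)) + DR) :=
          Nat.add_le_add hdeg (Nat.add_le_add
            (hDSbound.trans (Nat.add_le_add_right hdeg _)) le_rfl)
      _ = 4 * DR + S.card * (S.card - 1) := by ring
  refine ⟨hmain, ?_⟩
  have hcast : ((S.card : ℝ)) * ((S.card : ℝ) - 1) = (S.card * (S.card - 1) : ℕ) := by
    rcases Nat.eq_zero_or_pos S.card with h | h
    · simp [h]
    · push_cast [Nat.cast_sub h]
      ring
  have h2 : (2 * m : ℝ) ≤ 4 * DR + (S.card * (S.card - 1) : ℕ) := by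
    exact_mod_cast hmain
  rw [← hcast] at h2
  linarith
end

section
/- Let G = (V,E) be a finite simple undirected graph, V_inner ⊆ V, and t ∈ V a vertex not belonging to V_inner and not adjacent to any vertex of V_inner. Let G' be the graph obtained from G by adding an edge between t and every vertex of N_G(V_inner)∖V_inner (the external neighborhood of V_inner). Then: (i) for all vertices u, v, every fractional (u,v)-vertex cut of G' is also a fractional (u,v)-vertex cut of G; and (ii) every vertex cut (L,S,R) of G with L ⊆ V_inner is also a vertex cut of G'. -/
/-- Let `G` be a finite simple graph, `V_inner ⊆ V`, and `t` a vertex outside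
`V_inner` not adjacent to any vertex of `V_inner`. Let `G'` be obtained from `G` by adding an
edge from `t` to every vertex of the external neighborhood `N_G(V_inner) ∖ V_inner`. Then:
(i) every fractional `(u,v)`-vertex cut of `G'` is a fractional `(u,v)`-vertex cut of `G`;
(ii) every vertex cut `(L,S,R)` of `G` with `L ⊆ V_inner` is also a vertex cut of `G'`. -/
theorem stmt_8 {V : Type*} [Fintype V] (G : SimpleGraph V)
    (Vinner : Set V) (t : V) (ht : t ∉ Vinner)
    (htadj : ∀ v ∈ Vinner, ¬ G.Adj t v)
    (extN : Set V)
    (hextN : extN = {v | v ∉ Vinner ∧ ∃ u ∈ Vinner, G.Adj u v})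
    (G' : SimpleGraph V)
    (hG' : ∀ u v : V, G'.Adj u v ↔
      G.Adj u v ∨ (u = t ∧ v ∈ extN) ∨ (v = t ∧ u ∈ extN)) :
    (∀ u v : V, ∀ C : V → ℝ, (∀ x, 0 ≤ C x) → C u = 0 → C v = 0 →
        (∀ p : G'.Walk u v, p.IsPath → 1 ≤ (p.support.map C).sum) →
        (∀ p : G.Walk u v, p.IsPath → 1 ≤ (p.support.map C).sum)) ∧
    (∀ L S R : Set V, L ∪ S ∪ R = Set.univ →
        Disjoint L S → Disjoint L R → Disjoint S R →
        L.Nonempty → R.Nonempty → L ⊆ Vinner →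
        (∀ a ∈ L, ∀ b ∈ R, ¬ G.Adj a b) →
        (∀ a ∈ L, ∀ b ∈ R, ¬ G'.Adj a b)) := by
  have hle : G ≤ G' := by
    intro a b hab
    rw [hG']
    exact Or.inl hab
  constructor
  · intro u v C _ _ _ hcut p hp
    have h1 : ∀ e ∈ p.edges, e ∈ G'.edgeSet := by
      intro e he
      exact SimpleGraph.edgeSet_mono hle (p.edges_subset_edgeSet he)
    have := hcut (p.transfer G' h1) (hp.transfer h1)
    rwa [SimpleGraph.Walk.support_transfer] at this
  · intro L S R _ _ _ _ _ _ hLV hnadj a ha b hb hab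
    rw [hG'] at hab
    rcases hab with h | ⟨h1, _⟩ | ⟨h1, h2⟩
    · exact hnadj a ha b hb h
    · exact ht (hLV (h1 ▸ ha))
    · rw [hextN] at h2
      exact h2.1 (hLV ha)
end

section
/- Let G = (V,E) be a finite simple undirected graph with |V| = n ≥ 2, let B = ⌈2·log₂ n⌉ - 1, and let l : E → M be an injective labeling of the edges into an additive commutative group M of exponent 2 (e.g., B-bit strings under XOR). Let c(i,e), for i ∈ {1,…,B} and e ∈ E, be mutually independent Bernoulli random variables with Pr[c(i,e) = 1] = 2^{-i}. For S ⊆ V and i ∈ {1,…,B}, define H_{c,i}(S) = Σ_{v ∈ S} Σ_{e ∈ δ(v), c(i,e) = 1} l(e). If the set of edges with exactly one endpoint in S is nonempty, then with probability at least 1/9 there exists an index i ∈ {1,…,B} and an edge e with exactly one endpoint in S such that H_{c,i}(S) = l(e). -/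
open scoped ENNReal

/-!
Let `C` be the set of edges crossing the cut `(S, Sᶜ)` and `k = |C| ≥ 1`. Since `x + x = 0`,
every edge with both ends in `S` is counted twice in `H_{c,i}(S)` and cancels, so `H_{c,i}(S)`
is the sum of the labels of the crossing edges `e` with `c(i,e) = 1`; in particular
`H_{c,i}(S) = l(e)` as soon as `e` is the only such edge. Take `i` with `k < 2^i ≤ 2k`; this `i`
is at most `B` because `2k ≤ n² - n` and `n² ≤ 2^(B+1)`. With `p = 2⁻ⁱ`, the probability that
exactly one crossing edge is sampled at level `i` is
`k p (1-p)^(k-1) ≥ 1/2 · (1 - p)^(2^i) ≥ 1/2 · 1/4 ≥ 1/9`.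
-/

open Finset MeasureTheory ProbabilityTheory

lemma one_quarter_le_one_sub_inv_two_pow_pow {m : ℕ} (hm : 1 ≤ m) :
    (1 / 4 : ℝ) ≤ (1 - (2 : ℝ)⁻¹ ^ m) ^ 2 ^ m := by
  induction m, hm using Nat.le_induction with
  | base => norm_num
  | succ m _ ih =>
    set y : ℝ := (2 : ℝ)⁻¹ ^ (m + 1)
    have hy : (2 : ℝ)⁻¹ ^ m = 2 * y := by simp only [y, pow_succ]; ring
    calc (1 / 4 : ℝ) ≤ (1 - 2 * y) ^ 2 ^ m := hy ▸ ih
      _ ≤ ((1 - y) ^ 2) ^ 2 ^ m := by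
        gcongr
        · rw [← hy, sub_nonneg]; exact pow_le_one₀ (by norm_num) (by norm_num)
        · nlinarith [sq_nonneg y]
      _ = (1 - y) ^ 2 ^ (m + 1) := by rw [← pow_mul, pow_succ']

lemma one_ninth_le_mul_pow_mul_one_sub_pow_pred {k i : ℕ} (hi : 1 ≤ i) (hk : k ≤ 2 ^ i)
    (hk' : 2 ^ i ≤ 2 * k) :
    (1 / 9 : ℝ) ≤ k * ((2 : ℝ)⁻¹ ^ i * (1 - (2 : ℝ)⁻¹ ^ i) ^ (k - 1)) := by
  set p : ℝ := (2 : ℝ)⁻¹ ^ i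
  have hp0 : 0 ≤ p := by positivity
  have hp1 : p ≤ 1 := pow_le_one₀ (by norm_num) (by norm_num)
  have hkp : (1 / 2 : ℝ) ≤ k * p := by
    have : ((2 ^ i : ℕ) : ℝ) * p = 1 := by simp [p]
    have hk'' : ((2 ^ i : ℕ) : ℝ) ≤ 2 * k := by exact_mod_cast hk'
    nlinarith
  have hq : (1 / 4 : ℝ) ≤ (1 - p) ^ (k - 1) :=
    (one_quarter_le_one_sub_inv_two_pow_pow hi).trans
      (pow_le_pow_of_le_one (sub_nonneg.2 hp1) (sub_le_self 1 hp0) (by omega))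
  nlinarith

lemma ENNReal.one_ninth_le_mul_pow_mul_one_sub_pow_pred {k i : ℕ} (hi : 1 ≤ i) (hk : k ≤ 2 ^ i)
    (hk' : 2 ^ i ≤ 2 * k) :
    (1 / 9 : ℝ≥0∞) ≤ k * ((2 : ℝ≥0∞)⁻¹ ^ i * (1 - (2 : ℝ≥0∞)⁻¹ ^ i) ^ (k - 1)) := by
  have hp : (2 : ℝ≥0∞)⁻¹ ^ i = ENNReal.ofReal ((2 : ℝ)⁻¹ ^ i) := by
    rw [ENNReal.ofReal_pow (by norm_num), ENNReal.ofReal_inv_of_pos (by norm_num),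
      ENNReal.ofReal_ofNat]
  have hq : 1 - (2 : ℝ≥0∞)⁻¹ ^ i = ENNReal.ofReal (1 - (2 : ℝ)⁻¹ ^ i) := by
    rw [ENNReal.ofReal_sub _ (by positivity), ENNReal.ofReal_one, hp]
  have hp1 : (2 : ℝ)⁻¹ ^ i ≤ 1 := pow_le_one₀ (by norm_num) (by norm_num)
  rw [hq, hp, ← ENNReal.ofReal_pow (sub_nonneg.2 hp1), ← ENNReal.ofReal_mul (by positivity),
    ← ENNReal.ofReal_natCast, ← ENNReal.ofReal_mul (by positivity)]
  calc (1 / 9 : ℝ≥0∞) = ENNReal.ofReal (1 / 9) := by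
        rw [ENNReal.ofReal_div_of_pos (by norm_num), ENNReal.ofReal_one, ENNReal.ofReal_ofNat]
    _ ≤ _ := ENNReal.ofReal_le_ofReal (_root_.one_ninth_le_mul_pow_mul_one_sub_pow_pred hi hk hk')

lemma exists_lt_two_pow_le_two_mul {k : ℕ} (hk : 0 < k) :
    ∃ i, 1 ≤ i ∧ k < 2 ^ i ∧ 2 ^ i ≤ 2 * k := by
  refine ⟨Nat.log 2 (2 * k), Nat.le_log_of_pow_le one_lt_two (by omega), ?_,
    Nat.pow_log_le_self 2 (by omega)⟩
  have := Nat.lt_pow_succ_log_self one_lt_two (2 * k)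
  rw [pow_succ] at this
  omega

lemma le_natCeil_two_mul_logb_sub_one {n i : ℕ} (h : 2 ^ i < n ^ 2) :
    i ≤ ⌈2 * Real.logb 2 n⌉₊ - 1 := by
  have hlog : 2 * Real.logb 2 n = Real.logb ((2 : ℕ) : ℝ) ((n ^ 2 : ℕ) : ℝ) := by
    push_cast
    rw [Real.logb_pow]
    norm_num
  rw [hlog, Real.natCeil_logb_natCast]
  have := (Nat.pow_lt_pow_iff_right (by norm_num)).1 (h.trans_le (Nat.le_pow_clog one_lt_two _))
  omega

lemma existsUnique_eq_true_iff {ι : Type*} [DecidableEq ι] (f : ι → Bool) :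
    (∃! j, f j = true) ↔ ∃ i, ∀ j, f j = decide (j = i) := by
  refine exists_congr fun i =>
    ⟨fun ⟨hi, huniq⟩ j => ?_, fun h => ⟨by simpa using h i, fun j hj => ?_⟩⟩
  · by_cases h : j = i
    · simp [h, hi]
    · simpa [h] using mt (huniq j) h
  · simpa [hj] using h j

theorem measure_existsUnique_eq_true {ι Ω : Type*} [Fintype ι] [DecidableEq ι]
    [MeasurableSpace Ω] {μ : Measure Ω} [IsProbabilityMeasure μ] {X : ι → Ω → Bool}
    (hX : ∀ j, Measurable (X j)) (hind : iIndepFun X μ) {p : ℝ≥0∞}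
    (hp : ∀ j, μ {ω | X j ω = true} = p) :
    μ {ω | ∃! j, X j ω = true} = Fintype.card ι * (p * (1 - p) ^ (Fintype.card ι - 1)) := by
  set A : ι → Set Ω := fun i => ⋂ j, X j ⁻¹' {decide (j = i)}
  have hA : ∀ i, μ (A i) = p * (1 - p) ^ (Fintype.card ι - 1) := by
    intro i
    have hfalse : ∀ j ≠ i, μ (X j ⁻¹' {decide (j = i)}) = 1 - p := fun j hj => by
      have hm : MeasurableSet {ω | X j ω = true} := hX j (measurableSet_singleton true)
      rw [← hp j, ← prob_compl_eq_one_sub hm]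
      congr 1
      ext ω
      simp [hj]
    have hprod := hind.measure_inter_preimage_eq_mul univ (sets := fun j => {decide (j = i)})
      (fun _ _ => measurableSet_singleton _)
    simp only [mem_univ, Set.iInter_true] at hprod
    rw [hprod, ← mul_prod_erase _ _ (mem_univ i),
      prod_congr rfl fun j hj => hfalse j (ne_of_mem_erase hj), prod_const,
      card_erase_of_mem (mem_univ i), card_univ, ← hp i]
    simp [Set.preimage]
  have hunion : {ω | ∃! j, X j ω = true} = ⋃ i, A i := by
    ext ω
    simp [A, existsUnique_eq_true_iff]
  have hdisj : Pairwise (Function.onFun Disjoint A) := fun i i' hii' =>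
    Set.disjoint_left.2 fun ω hi hi' => by
      have h := (Set.mem_iInter.1 hi i).symm.trans (Set.mem_iInter.1 hi' i)
      simp [hii'] at h
  rw [hunion, measure_iUnion hdisj fun i => .iInter fun j => hX j (measurableSet_singleton _),
    tsum_fintype, sum_congr rfl fun i _ => hA i, sum_const, card_univ, nsmul_eq_mul]

def Sym2.Crosses {V : Type*} (S : Finset V) (e : Sym2 V) : Prop :=
  ∃ u v, e = s(u, v) ∧ u ∈ S ∧ v ∉ S

lemma Sym2.crosses_mk_iff {V : Type*} {S : Finset V} {u v : V} :
    s(u, v).Crosses S ↔ (u ∈ S ↔ v ∉ S) := by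
  simp only [Sym2.Crosses, Sym2.eq_iff]
  constructor
  · rintro ⟨a, b, ⟨rfl, rfl⟩ | ⟨rfl, rfl⟩, ha, hb⟩ <;> tauto
  · intro h
    by_cases hu : u ∈ S
    · exact ⟨u, v, .inl ⟨rfl, rfl⟩, hu, h.1 hu⟩
    · exact ⟨v, u, .inr ⟨rfl, rfl⟩, by tauto, hu⟩

lemma Sym2.card_filter_mem_nsmul {V M : Type*} [DecidableEq V] [AddCommGroup M]
    (hM : ∀ x : M, x + x = 0) (S : Finset V) [DecidablePred (Sym2.Crosses S)] {e : Sym2 V}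
    (he : ¬ e.IsDiag) (x : M) :
    #{v ∈ S | v ∈ e} • x = if e.Crosses S then x else 0 := by
  obtain ⟨u, v⟩ := e
  have huv : u ≠ v := he
  simp only [Sym2.mem_iff, filter_or, filter_eq', crosses_mk_iff]
  by_cases hu : u ∈ S <;> by_cases hv : v ∈ S <;>
    simp [hu, hv, huv, card_insert_of_notMem, two_nsmul, hM]

namespace SimpleGraph

variable {V M : Type*} [Fintype V] (G : SimpleGraph V) [DecidableRel G.Adj] [AddCommGroup M]

lemma two_mul_card_edgeFinset_add_card_le_sq :
    2 * #G.edgeFinset + Fintype.card V ≤ Fintype.card V ^ 2 := by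
  have h := G.card_edgeFinset_le_card_choose_two
  generalize Fintype.card V = n at h ⊢
  rw [Nat.choose_two_right] at h
  have := Nat.div_mul_le_self (n * (n - 1)) 2
  cases n with
  | zero => simp_all
  | succ m =>
    simp only [Nat.add_sub_cancel] at h this
    nlinarith

open Classical in
noncomputable def cutFinset (S : Finset V) : Finset (Sym2 V) := {e ∈ G.edgeFinset | e.Crosses S}

lemma mem_cutFinset {S : Finset V} {e : Sym2 V} :
    e ∈ G.cutFinset S ↔ e ∈ G.edgeSet ∧ e.Crosses S := by
  simp [cutFinset]

lemma two_mul_card_cutFinset_lt_sq {S : Finset V} (hS : (G.cutFinset S).Nonempty) :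
    2 * #(G.cutFinset S) < Fintype.card V ^ 2 := by
  obtain ⟨e, he⟩ := hS
  obtain ⟨u, -⟩ := ((G.mem_cutFinset).1 he).2
  have hV : 0 < Fintype.card V := Fintype.card_pos_iff.2 ⟨u⟩
  have hcut : #(G.cutFinset S) ≤ #G.edgeFinset :=
    card_le_card fun e he => mem_edgeFinset.2 ((G.mem_cutFinset).1 he).1
  have := G.two_mul_card_edgeFinset_add_card_le_sq
  omega

theorem sum_sum_filter_incidenceFinset [DecidableEq V] (hM : ∀ x : M, x + x = 0)
    (l : Sym2 V → M) (S : Finset V) (P : Sym2 V → Prop) [DecidablePred P] :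
    ∑ v ∈ S, ∑ e ∈ G.incidenceFinset v with P e, l e = ∑ e ∈ G.cutFinset S with P e, l e := by
  classical
  have hinc : ∀ v, {e ∈ G.incidenceFinset v | P e} = {e ∈ G.edgeFinset | P e ∧ v ∈ e} :=
    fun v => by
      ext e
      simp only [mem_filter, mem_incidenceFinset, incidenceSet, Set.mem_ofPred_eq, mem_edgeFinset]
      tauto
  calc ∑ v ∈ S, ∑ e ∈ G.incidenceFinset v with P e, l e
      = ∑ e ∈ G.edgeFinset with P e, #{v ∈ S | v ∈ e} • l e := by
        simp_rw [hinc, ← filter_filter, sum_filter (p := fun e => _ ∈ e), sum_comm (s := S)]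
        simp only [← sum_filter, sum_const]
    _ = ∑ e ∈ G.edgeFinset with P e, if e.Crosses S then l e else 0 :=
        sum_congr rfl fun e he => Sym2.card_filter_mem_nsmul hM S
          (G.not_isDiag_of_mem_edgeSet (mem_edgeFinset.1 (mem_filter.1 he).1)) (l e)
    _ = ∑ e ∈ G.cutFinset S with P e, l e := by
        rw [← sum_filter, filter_filter, cutFinset, filter_filter]
        simp only [and_comm]

theorem sum_sum_filter_incidenceFinset_eq_of_unique [DecidableEq V] (hM : ∀ x : M, x + x = 0)
    (l : Sym2 V → M) {S : Finset V} {P : Sym2 V → Prop} [DecidablePred P] {e : Sym2 V}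
    (he : e ∈ G.cutFinset S) (hPe : P e) (huniq : ∀ e' ∈ G.cutFinset S, P e' → e' = e) :
    ∑ v ∈ S, ∑ e' ∈ G.incidenceFinset v with P e', l e' = l e := by
  have : {e' ∈ G.cutFinset S | P e'} = {e} := by
    ext e'
    simp only [mem_filter, mem_singleton]
    exact ⟨fun h => huniq e' h.1 h.2, fun h => h ▸ ⟨he, hPe⟩⟩
  rw [sum_sum_filter_incidenceFinset G hM, this, sum_singleton]

end SimpleGraph

theorem stmt_10_general {V : Type*} [Fintype V] [DecidableEq V] (G : SimpleGraph V)
    [DecidableRel G.Adj]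
    (n : ℕ) (hn : n = Fintype.card V)
    (B : ℕ) (hB : B = ⌈2 * Real.logb 2 n⌉₊ - 1)
    {M : Type*} [AddCommGroup M] (hM : ∀ x : M, x + x = 0)
    (l : Sym2 V → M)
    {Ω : Type*} [MeasurableSpace Ω] (μ : MeasureTheory.Measure Ω)
    [MeasureTheory.IsProbabilityMeasure μ]
    (c : ℕ → Sym2 V → Ω → Bool)
    (hmeas : ∀ i e, Measurable (c i e))
    (hindep : ProbabilityTheory.iIndepFun
      (m := fun _ : {q : ℕ × Sym2 V // q.1 ∈ Finset.Icc 1 B ∧ q.2 ∈ G.edgeSet} =>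
        (inferInstance : MeasurableSpace Bool))
      (fun q ω => c q.1.1 q.1.2 ω) μ)
    (hmarg : ∀ i ∈ Finset.Icc 1 B, ∀ e ∈ G.edgeSet,
      μ {ω | c i e ω = true} = (2 : ℝ≥0∞)⁻¹ ^ i)
    (S : Finset V)
    (hcutne : ∃ e ∈ G.edgeSet, ∃ u v : V, e = s(u, v) ∧ u ∈ S ∧ v ∉ S) :
    (1 : ℝ≥0∞) / 9 ≤
      μ {ω | ∃ i ∈ Finset.Icc 1 B, ∃ e ∈ G.edgeSet,
        (∃ u v : V, e = s(u, v) ∧ u ∈ S ∧ v ∉ S) ∧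
        (∑ v ∈ S, ∑ e' ∈ (G.incidenceFinset v).filter (fun e' => c i e' ω = true), l e')
          = l e} := by
  subst hn
  set C := G.cutFinset S
  obtain ⟨e₀, he₀, hcross₀⟩ := hcutne
  have hC : C.Nonempty := ⟨e₀, (G.mem_cutFinset).2 ⟨he₀, hcross₀⟩⟩
  obtain ⟨i, hi, hki, hik⟩ := exists_lt_two_pow_le_two_mul hC.card_pos
  have hiB : i ∈ Icc 1 B := mem_Icc.2
    ⟨hi, hB ▸ le_natCeil_two_mul_logb_sub_one (hik.trans_lt (G.two_mul_card_cutFinset_lt_sq hC))⟩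
  let X : C → Ω → Bool := fun e => c i e
  have hXind : iIndepFun X μ := hindep.precomp (g := fun e : C =>
      ⟨(i, e.1), hiB, ((G.mem_cutFinset).1 e.2).1⟩)
    fun e e' h => Subtype.ext (congrArg (fun q => q.1.2) h)
  have hXmarg : ∀ e : C, μ {ω | X e ω = true} = (2 : ℝ≥0∞)⁻¹ ^ i :=
    fun e => hmarg i hiB e ((G.mem_cutFinset).1 e.2).1
  calc (1 : ℝ≥0∞) / 9
      ≤ #C * ((2 : ℝ≥0∞)⁻¹ ^ i * (1 - (2 : ℝ≥0∞)⁻¹ ^ i) ^ (#C - 1)) :=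
        ENNReal.one_ninth_le_mul_pow_mul_one_sub_pow_pred hi hki.le hik
    _ = μ {ω | ∃! e : C, X e ω = true} := by
        rw [measure_existsUnique_eq_true (X := X) (fun e => hmeas i e) hXind hXmarg,
          Fintype.card_coe]
    _ ≤ _ := by
        refine measure_mono fun ω ⟨⟨e, he⟩, hPe, huniq⟩ => ?_
        exact ⟨i, hiB, e, ((G.mem_cutFinset).1 he).1, ((G.mem_cutFinset).1 he).2,
          G.sum_sum_filter_incidenceFinset_eq_of_unique hM l he hPe
            fun e' he' hPe' => congrArg Subtype.val (huniq ⟨e', he'⟩ hPe')⟩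

/-- Let `G` be a finite simple graph on `n ≥ 2` vertices,
`B = ⌈2 log₂ n⌉ - 1`, `l : E → M` an injective labeling of the edges into an additive
commutative group of exponent 2, and let `c(i,e)` (`1 ≤ i ≤ B`, `e ∈ E`) be mutually
independent Bernoulli random variables with `Pr[c(i,e) = 1] = 2⁻ⁱ`. Set
`H_{c,i}(S) = ∑_{v ∈ S} ∑_{e ∈ δ(v), c(i,e)=1} l(e)`. If some edge has exactly one endpoint
in `S`, then with probability at least `1/9` there are `i ∈ {1,…,B}` and an edge `e` with
exactly one endpoint in `S` such that `H_{c,i}(S) = l(e)`. -/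
theorem stmt_10 {V : Type*} [Fintype V] [DecidableEq V] (G : SimpleGraph V)
    [DecidableRel G.Adj]
    (n : ℕ) (hn : n = Fintype.card V) (hn2 : 2 ≤ n)
    (B : ℕ) (hB : B = ⌈2 * Real.logb 2 n⌉₊ - 1)
    {M : Type*} [AddCommGroup M] (hM : ∀ x : M, x + x = 0)
    (l : Sym2 V → M) (hl : Set.InjOn l G.edgeSet)
    {Ω : Type*} [MeasurableSpace Ω] (μ : MeasureTheory.Measure Ω)
    [MeasureTheory.IsProbabilityMeasure μ]
    (c : ℕ → Sym2 V → Ω → Bool)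
    (hmeas : ∀ i e, Measurable (c i e))
    (hindep : ProbabilityTheory.iIndepFun
      (m := fun _ : {q : ℕ × Sym2 V // q.1 ∈ Finset.Icc 1 B ∧ q.2 ∈ G.edgeSet} =>
        (inferInstance : MeasurableSpace Bool))
      (fun q ω => c q.1.1 q.1.2 ω) μ)
    (hmarg : ∀ i ∈ Finset.Icc 1 B, ∀ e ∈ G.edgeSet,
      μ {ω | c i e ω = true} = (2 : ℝ≥0∞)⁻¹ ^ i)
    (S : Finset V)
    (hcutne : ∃ e ∈ G.edgeSet, ∃ u v : V, e = s(u, v) ∧ u ∈ S ∧ v ∉ S) :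
    (1 : ℝ≥0∞) / 9 ≤
      μ {ω | ∃ i ∈ Finset.Icc 1 B, ∃ e ∈ G.edgeSet,
        (∃ u v : V, e = s(u, v) ∧ u ∈ S ∧ v ∉ S) ∧
        (∑ v ∈ S, ∑ e' ∈ (G.incidenceFinset v).filter (fun e' => c i e' ω = true), l e')
          = l e} :=
  stmt_10_general G n hn B hB hM l μ c hmeas hindep hmarg S hcutne
end

section
/- Let G = (V,E) be a finite simple undirected graph with n = |V| ≥ 2, let s, t ∈ V be distinct, let k ≥ 2 be an integer, and suppose S ⊆ V∖{s,t} is an (s,t)-separator with |S| ≤ k - 1. Set ε = 1/(16(k-1)) and r = ⌈320·k³·ln n⌉. Define w^{(1)}(s) = w^{(1)}(t) = 0 and w^{(1)}(v) = 1 for all other v. Suppose that for each i = 1, …, r a simple (s,t)-path P^{(i)} is chosen, and weights are updated by w^{(i+1)}(v) = (1+ε)·w^{(i)}(v) for v ∈ V(P^{(i)}) and w^{(i+1)}(v) = w^{(i)}(v) otherwise. Then, writing W^{(i)} = Σ_{v ∈ V} w^{(i)}(v), there exists an iteration i ∈ {1,…,r} with w^{(i)}(P^{(i)}) ≥ W^{(i)}/(k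 - 0.6), where w^{(i)}(P^{(i)}) = Σ_{v ∈ V(P^{(i)})} w^{(i)}(v). -/
/-!
Suppose every chosen path is light: `w⁽ⁱ⁾(P⁽ⁱ⁾) < W⁽ⁱ⁾ / (k - 0.6)`. Each update then multiplies
the total weight by at most `1 + ε / (k - 0.6)`, so `W⁽ʳ⁺¹⁾ ≤ n (1 + ε / (k - 0.6)) ^ r`. On the
other hand every path meets the separator `S` of at most `k - 1` vertices, so some `v ∈ S` lies
on at least `r / (k - 1)` of the paths and alone has weight at least `(1 + ε) ^ (r / (k - 1))`.
Taking logarithms, the growth rate `ε / ((1 + ε)(k - 1))` of `v` beats the rate `ε / (k - 0.6)`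
of the total by more than `1 / (320 k³)`, which is too much once `r ≥ 320 k³ ln n`.
-/

open Finset

lemma Finset.exists_card_le_card_mul_card_filter_mem {ι α : Type*} [DecidableEq α]
    {I : Finset ι} {S : Finset α} {A : ι → Finset α} (hI : I.Nonempty)
    (hS : ∀ i ∈ I, ∃ a ∈ S, a ∈ A i) :
    ∃ a ∈ S, #I ≤ #S * #{i ∈ I | a ∈ A i} := by
  obtain ⟨i₀, hi₀⟩ := hI
  obtain ⟨a₀, ha₀, -⟩ := hS i₀ hi₀
  have hcount : #I ≤ ∑ a ∈ S, #{i ∈ I | a ∈ A i} := by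
    refine (card_eq_sum_ones I).trans_le <| (sum_le_sum fun i hi => card_pos.2 ?_).trans_eq
      (sum_card_bipartiteAbove_eq_sum_card_bipartiteBelow (fun i a => a ∈ A i) (s := I) (t := S))
    obtain ⟨a, ha, hai⟩ := hS i hi
    exact ⟨a, mem_filter.2 ⟨ha, hai⟩⟩
  refine exists_le_of_sum_le ⟨a₀, ha₀⟩ ?_
  rw [sum_const, smul_eq_mul, ← mul_sum]
  exact Nat.mul_le_mul_left _ hcount

lemma sum_update_eq {V : Type*} [Fintype V] [DecidableEq V] (A : Finset V) (ε : ℝ)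
    {w w' : V → ℝ} (h : ∀ v, w' v = if v ∈ A then (1 + ε) * w v else w v) :
    ∑ v, w' v = ∑ v, w v + ε * ∑ v ∈ A, w v := by
  have h' (v : V) : w' v = w v + if v ∈ A then ε * w v else 0 := by
    rw [h]; split_ifs <;> ring
  simp only [h', sum_add_distrib, sum_ite_mem, univ_inter, mul_sum]

section WeightUpdates

variable {V : Type*} [DecidableEq V] {A : ℕ → Finset V} {w : ℕ → V → ℝ} {ε : ℝ} {r : ℕ}

lemma weight_eq_pow_card
    (hupd : ∀ i, 1 ≤ i → i ≤ r → ∀ v, w (i + 1) v = if v ∈ A i then (1 + ε) * w i v else w i v)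
    (v : V) : w (r + 1) v = (1 + ε) ^ #{i ∈ Icc 1 r | v ∈ A i} * w 1 v := by
  induction r with
  | zero => simp
  | succ r ih =>
    rw [hupd (r + 1) (by omega) le_rfl, ih fun i h₁ h₂ => hupd i h₁ (by omega),
      ← insert_Icc_right_eq_Icc_add_one (by omega), filter_insert]
    split_ifs
    · rw [card_insert_of_notMem (by simp), pow_succ]
      ring
    · rfl

lemma pow_card_mul_le_sum_weight [Fintype V] (hε : 0 ≤ 1 + ε) (hw₁ : ∀ u, 0 ≤ w 1 u)
    (hupd : ∀ i, 1 ≤ i → i ≤ r → ∀ v, w (i + 1) v = if v ∈ A i then (1 + ε) * w i v else w i v)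
    (v : V) : (1 + ε) ^ #{i ∈ Icc 1 r | v ∈ A i} * w 1 v ≤ ∑ u, w (r + 1) u := by
  rw [← weight_eq_pow_card hupd]
  refine single_le_sum (fun u _ => ?_) (mem_univ v)
  rw [weight_eq_pow_card hupd]
  exact mul_nonneg (pow_nonneg hε _) (hw₁ u)

lemma sum_weight_le_pow_mul [Fintype V] (hε : 0 ≤ ε) {β : ℝ} (hβ : 0 ≤ β)
    (hupd : ∀ i, 1 ≤ i → i ≤ r → ∀ v, w (i + 1) v = if v ∈ A i then (1 + ε) * w i v else w i v)
    (hlight : ∀ i, 1 ≤ i → i ≤ r → ∑ v ∈ A i, w i v ≤ (∑ v, w i v) / β) :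
    ∑ v, w (r + 1) v ≤ (1 + ε / β) ^ r * ∑ v, w 1 v := by
  refine le_geom (u := fun j => ∑ v, w (j + 1) v) (by positivity) r fun j hj => ?_
  have hstep := mul_le_mul_of_nonneg_left (hlight (j + 1) (by omega) (by omega)) hε
  calc ∑ v, w (j + 1 + 1) v = ∑ v, w (j + 1) v + ε * ∑ v ∈ A (j + 1), w (j + 1) v :=
        sum_update_eq _ ε (hupd (j + 1) (by omega) (by omega))
    _ ≤ ∑ v, w (j + 1) v + ε * ((∑ v, w (j + 1) v) / β) := by linarith
    _ = (1 + ε / β) * ∑ v, w (j + 1) v := by ring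

end WeightUpdates

lemma one_div_lt_rate_gap {k : ℝ} (hk : 2 ≤ k) {ε : ℝ} (hε : ε = 1 / (16 * (k - 1))) :
    1 / (320 * k ^ 3) < ε / (1 + ε) / (k - 1) - ε / (k - 0.6) := by
  have h₁ : 0 < k - 1 := by linarith
  have h₂ : 0 < k - 0.6 := by linarith
  have h₃ : 0 < 16 * k - 15 := by linarith
  have hε' : ε / (1 + ε) = 1 / (16 * k - 15) := by rw [hε]; field_simp; ring
  rw [hε', hε, div_div, div_div, div_sub_div _ _ (by positivity) (by positivity),
    div_lt_div_iff₀ (by positivity) (by positivity)]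
  nlinarith [mul_pos h₁ h₂, mul_pos (mul_pos h₁ h₂) h₃]

lemma one_add_div_pow_mul_lt_one_add_pow {k : ℝ} (hk : 2 ≤ k) {ε : ℝ}
    (hε : ε = 1 / (16 * (k - 1))) {x : ℝ} (hx : 1 < x) {r c : ℕ}
    (hr : 320 * k ^ 3 * Real.log x ≤ r) (hc : r ≤ (k - 1) * c) :
    (1 + ε / (k - 0.6)) ^ r * x < (1 + ε) ^ c := by
  have hk₁ : 0 < k - 1 := by linarith
  have hk₂ : 0 < k - 0.6 := by linarith
  have hε₀ : 0 < ε := by rw [hε]; positivity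
  have hlog_q : Real.log (1 + ε / (k - 0.6)) ≤ ε / (k - 0.6) := by
    linarith [Real.log_le_sub_one_of_pos (by positivity : 0 < 1 + ε / (k - 0.6))]
  have hlog_ε : ε / (1 + ε) ≤ Real.log (1 + ε) :=
    calc ε / (1 + ε) = 1 - (1 + ε)⁻¹ := by field_simp; ring
      _ ≤ Real.log (1 + ε) := Real.one_sub_inv_le_log_of_pos (by positivity)
  have hr₀ : 0 < (r : ℝ) := lt_of_lt_of_le (by have := Real.log_pos hx; positivity) hr
  have hcr : (r : ℝ) / (k - 1) ≤ c := by rw [div_le_iff₀ hk₁]; linarith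
  have hlogx : Real.log x < r * (ε / (1 + ε) / (k - 1) - ε / (k - 0.6)) :=
    calc Real.log x ≤ r * (1 / (320 * k ^ 3)) := by
          rw [mul_one_div, le_div_iff₀ (by positivity)]; linarith
      _ < _ := mul_lt_mul_of_pos_left (one_div_lt_rate_gap hk hε) hr₀
  rw [← Real.log_lt_log_iff (by positivity) (by positivity), Real.log_mul (by positivity)
    (by positivity), Real.log_pow, Real.log_pow]
  calc r * Real.log (1 + ε / (k - 0.6)) + Real.log x
      < r * (ε / (k - 0.6)) + r * (ε / (1 + ε) / (k - 1) - ε / (k - 0.6)) :=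
        add_lt_add_of_le_of_lt (by gcongr) hlogx
    _ = r / (k - 1) * (ε / (1 + ε)) := by ring
    _ ≤ c * Real.log (1 + ε) := by gcongr

theorem stmt_13_general {V : Type*} [Fintype V] [DecidableEq V] (G : SimpleGraph V)
    (n : ℕ) (hn : n = Fintype.card V) (hn2 : 2 ≤ n)
    (s t : V)
    (k : ℕ) (hk : 2 ≤ k)
    (S : Finset V) (hSs : s ∉ S) (hSt : t ∉ S) (hScard : S.card ≤ k - 1)
    (hsep : ∀ p : G.Walk s t, p.IsPath → ∃ v ∈ S, v ∈ p.support)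
    (ε : ℝ) (hε : ε = 1 / (16 * ((k : ℝ) - 1)))
    (r : ℕ) (hr : r = ⌈320 * (k : ℝ) ^ 3 * Real.log n⌉₊)
    (P : ℕ → G.Walk s t) (hP : ∀ i, 1 ≤ i → i ≤ r → (P i).IsPath)
    (w : ℕ → V → ℝ)
    (hw1s : w 1 s = 0) (hw1t : w 1 t = 0)
    (hw1o : ∀ v, v ≠ s → v ≠ t → w 1 v = 1)
    (hupd : ∀ i, 1 ≤ i → i ≤ r → ∀ v,
      w (i + 1) v = if v ∈ (P i).support then (1 + ε) * w i v else w i v) :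
    ∃ i, 1 ≤ i ∧ i ≤ r ∧
      ((P i).support.map (w i)).sum ≥ (∑ v, w i v) / ((k : ℝ) - 0.6) := by
  by_contra! hlight
  have hkR : (2 : ℝ) ≤ k := by exact_mod_cast hk
  have hnR : (1 : ℝ) < n := by exact_mod_cast hn2
  have hε₀ : 0 ≤ ε := hε ▸ one_div_nonneg.2 (by linarith)
  have hr₁ : 1 ≤ r := hr ▸ Nat.ceil_pos.2 (by have := Real.log_pos hnR; positivity)
  have hw₁ (v : V) : 0 ≤ w 1 v ∧ w 1 v ≤ 1 := by
    by_cases hvs : v = s; · simp [hvs, hw1s]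
    by_cases hvt : v = t; · simp [hvt, hw1t]
    simp [hw1o v hvs hvt]
  set A : ℕ → Finset V := fun i => (P i).support.toFinset
  have hupdA : ∀ i, 1 ≤ i → i ≤ r → ∀ v,
      w (i + 1) v = if v ∈ A i then (1 + ε) * w i v else w i v := by
    simpa [A] using hupd
  have htotal : ∑ v, w (r + 1) v ≤ (1 + ε / (k - 0.6)) ^ r * n := by
    refine (sum_weight_le_pow_mul hε₀ (β := k - 0.6) (by linarith) hupdA
      fun i h₁ h₂ => ?_).trans ?_
    · rw [List.sum_toFinset _ (hP i h₁ h₂).support_nodup]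
      exact (hlight i h₁ h₂).le
    · have hq : 0 ≤ 1 + ε / (k - 0.6) := add_nonneg zero_le_one (div_nonneg hε₀ (by linarith))
      gcongr
      simpa [hn] using sum_le_sum fun v (_ : v ∈ univ) => (hw₁ v).2
  obtain ⟨v, hvS, hv⟩ := exists_card_le_card_mul_card_filter_mem (I := Icc 1 r) (S := S)
    (A := A) ⟨1, by simp [hr₁]⟩ fun i hi => by
      obtain ⟨h₁, h₂⟩ := mem_Icc.1 hi
      simpa [A] using hsep (P i) (hP i h₁ h₂)
  have hheavy : (1 + ε) ^ #{i ∈ Icc 1 r | v ∈ A i} ≤ ∑ u, w (r + 1) u := by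
    simpa [hw1o v (ne_of_mem_of_not_mem hvS hSs) (ne_of_mem_of_not_mem hvS hSt)] using
      pow_card_mul_le_sum_weight (by linarith) (fun u => (hw₁ u).1) hupdA v
  have hc : (r : ℝ) ≤ (k - 1) * #{i ∈ Icc 1 r | v ∈ A i} := by
    have h : r ≤ (k - 1) * #{i ∈ Icc 1 r | v ∈ A i} := by
      simpa using hv.trans (Nat.mul_le_mul_right _ hScard)
    rw [← Nat.cast_one, ← Nat.cast_sub (by omega)]
    exact_mod_cast h
  exact (one_add_div_pow_mul_lt_one_add_pow hkR hε hnR (hr ▸ Nat.le_ceil _) hc).not_ge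
    (hheavy.trans htotal)

/-- multiplicative weight updates for fractional `(s,t)`-cuts.
Let `G` be a finite simple graph on `n ≥ 2` vertices, `s ≠ t`, `k ≥ 2`, and
`S ⊆ V ∖ {s,t}` an `(s,t)`-separator with `|S| ≤ k - 1` (every `(s,t)`-path meets `S`).
Set `ε = 1/(16(k-1))` and `r = ⌈320 k³ ln n⌉`. Initialize `w⁽¹⁾(s) = w⁽¹⁾(t) = 0` and
`w⁽¹⁾(v) = 1` otherwise. If in each iteration `i = 1,…,r` a simple `(s,t)`-path `P⁽ⁱ⁾` is
chosen and the weights of its vertices are multiplied by `(1+ε)`, then some iteration `i`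
satisfies `w⁽ⁱ⁾(P⁽ⁱ⁾) ≥ W⁽ⁱ⁾/(k - 0.6)` where `W⁽ⁱ⁾ = ∑_v w⁽ⁱ⁾(v)`. -/
theorem stmt_13 {V : Type*} [Fintype V] [DecidableEq V] (G : SimpleGraph V)
    (n : ℕ) (hn : n = Fintype.card V) (hn2 : 2 ≤ n)
    (s t : V) (hst : s ≠ t)
    (k : ℕ) (hk : 2 ≤ k)
    (S : Finset V) (hSs : s ∉ S) (hSt : t ∉ S) (hScard : S.card ≤ k - 1)
    (hsep : ∀ p : G.Walk s t, p.IsPath → ∃ v ∈ S, v ∈ p.support)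
    (ε : ℝ) (hε : ε = 1 / (16 * ((k : ℝ) - 1)))
    (r : ℕ) (hr : r = ⌈320 * (k : ℝ) ^ 3 * Real.log n⌉₊)
    (P : ℕ → G.Walk s t) (hP : ∀ i, 1 ≤ i → i ≤ r → (P i).IsPath)
    (w : ℕ → V → ℝ)
    (hw1s : w 1 s = 0) (hw1t : w 1 t = 0)
    (hw1o : ∀ v, v ≠ s → v ≠ t → w 1 v = 1)
    (hupd : ∀ i, 1 ≤ i → i ≤ r → ∀ v,
      w (i + 1) v = if v ∈ (P i).support then (1 + ε) * w i v else w i v) :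
    ∃ i, 1 ≤ i ∧ i ≤ r ∧
      ((P i).support.map (w i)).sum ≥ (∑ v, w i v) / ((k : ℝ) - 0.6) :=
  stmt_13_general G n hn hn2 s t k hk S hSs hSt hScard hsep ε hε r hr P hP w hw1s hw1t hw1o hupd
end

section
/- Let H = (V_H, E_H) be a finite simple graph with n = |V_H|, and let w : V_H → ℝ≥0; call a vertex trivial if w(v) = 1 and non-trivial otherwise. Let E_{≠1} ⊆ E_H be the set of edges incident to at least one non-trivial vertex, and call the connected components of H - E_{≠1} clusters. Then: (a) every non-trivial vertex forms a singleton cluster; and (b) defining ℓ(K) = w(u) when a cluster K = {u} consists of a single non-trivial vertex and ℓ(K) = 1 otherwise, for every simple path P in H, if P̂ denotes the sequence of clusters obtained from P by contracting each maximal run of consecutive vertices of P lying in a common cluster to one occurrence of that cluster, then w(P) - n ≤ Σ_{K occurring in P̂} ℓ(K) ≤ w(P), where w(P) = Σ_{v ∈ V(P)} w(v) and the sum over P̂ counts each occurrence. -/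
/-!
A non-trivial vertex loses all its edges in `H - E_{≠1}`, so it is a singleton cluster. Hence
`ℓ` of the cluster of `u` is `w u` for every vertex `u`, and a cluster containing two distinct
vertices consists of trivial vertices and has `ℓ = 1`. Along a simple path, contracting runs
therefore only deletes entries of weight `1`: `ℓ(P̂) + |P̂| = w(P) + |P|`, and
`0 ≤ |P̂| ≤ |P| ≤ n`.
-/

open scoped Classical

namespace List

variable {α R : Type*} [DecidableEq α]

theorem sum_map_add_length_destutter' [AddCommMonoidWithOne R] (f : α → R) (l : List α) (a : α)
    (h : (a :: l).IsChain fun x y => x = y → f x = 1) :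
    ((a :: l).map f).sum + ((l.destutter' (· ≠ ·) a).length : R) =
      ((l.destutter' (· ≠ ·) a).map f).sum + ((a :: l).length : R) := by
  induction l generalizing a with
  | nil => simp
  | cons b l ih =>
    obtain ⟨hab, hl⟩ := isChain_cons_cons.1 h
    specialize ih b hl
    simp only [map_cons, sum_cons, length_cons, Nat.cast_succ] at ih ⊢
    by_cases hne : a = b
    · subst hne
      rw [destutter'_cons_neg _ (not_not_intro rfl)]
      have := congrArg (f a + ·) ih
      rw [hab rfl] at this ⊢
      abel_nf at this ⊢
      exact this
    · rw [destutter'_cons_pos _ hne, map_cons, sum_cons, length_cons, Nat.cast_succ]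
      calc f a + (f b + (l.map f).sum) + ((l.destutter' (· ≠ ·) b).length + 1 : R)
          = f a + ((f b + (l.map f).sum) + (l.destutter' (· ≠ ·) b).length) + 1 := by abel
        _ = _ := by rw [ih]; abel

theorem sum_map_add_length_destutter [AddCommMonoidWithOne R] (f : α → R) {l : List α}
    (h : l.IsChain fun x y => x = y → f x = 1) :
    (l.map f).sum + ((l.destutter (· ≠ ·)).length : R) =
      ((l.destutter (· ≠ ·)).map f).sum + (l.length : R) := by
  cases l with
  | nil => simp
  | cons a l => rw [destutter_cons']; exact sum_map_add_length_destutter' f l a h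

variable [AddCommGroupWithOne R] [PartialOrder R] [IsOrderedAddMonoid R] [ZeroLEOneClass R]

theorem sum_map_sub_length_le_sum_map_destutter (f : α → R) {l : List α}
    (h : l.IsChain fun x y => x = y → f x = 1) :
    (l.map f).sum - l.length ≤ ((l.destutter (· ≠ ·)).map f).sum := by
  rw [sub_le_iff_le_add, ← sum_map_add_length_destutter f h]
  exact le_add_of_nonneg_right (Nat.cast_nonneg' _)

theorem sum_map_destutter_le_sum_map (f : α → R) {l : List α}
    (h : l.IsChain fun x y => x = y → f x = 1) :
    ((l.destutter (· ≠ ·)).map f).sum ≤ (l.map f).sum := by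
  refine le_of_add_le_add_right (a := (l.length : R)) ?_
  rw [← sum_map_add_length_destutter f h]
  exact add_le_add_right (Nat.mono_cast (α := R) (destutter_sublist (· ≠ ·) l).length_le) _

end List

namespace SimpleGraph

variable {V : Type*}

theorem eq_of_reachable_deleteEdges_incident (H : SimpleGraph V) {p : V → Prop} {v u : V}
    (hv : p v) (h : (H.deleteEdges {e ∈ H.edgeSet | ∃ x ∈ e, p x}).Reachable v u) : u = v := by
  obtain ⟨_ | ⟨hadj, _⟩⟩ := h
  · rfl
  · rw [deleteEdges_adj] at hadj
    exact absurd ⟨hadj.1, v, Sym2.mem_mk_left _ _, hv⟩ hadj.2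

section ClusterWeight

variable {M : Type*} [One M] {G : SimpleGraph V} {w : V → M} {ℓ : G.ConnectedComponent → M}
  (hsingleton : ∀ v, w v ≠ 1 → ∀ u, G.Reachable v u → u = v)
  (hℓ1 : ∀ K : G.ConnectedComponent, (∀ u, G.connectedComponentMk u = K → w u = 1) → ℓ K = 1)
include hsingleton hℓ1

theorem weight_connectedComponentMk
    (hℓ : ∀ u, w u ≠ 1 → ℓ (G.connectedComponentMk u) = w u) (u : V) :
    ℓ (G.connectedComponentMk u) = w u := by
  by_cases hu : w u = 1
  · rw [hu]
    refine hℓ1 _ fun z hz => ?_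
    by_contra hz1
    rw [hsingleton z hz1 u (ConnectedComponent.eq.1 hz)] at hu
    exact hz1 hu
  · exact hℓ u hu

theorem weight_eq_one_of_connectedComponentMk_eq {u u' : V} (hne : u ≠ u')
    (h : G.connectedComponentMk u = G.connectedComponentMk u') :
    ℓ (G.connectedComponentMk u) = 1 := by
  refine hℓ1 _ fun z hz => ?_
  by_contra hz1
  have hu := hsingleton z hz1 u (ConnectedComponent.eq.1 hz)
  have hu' := hsingleton z hz1 u' (ConnectedComponent.eq.1 (hz.trans h))
  exact hne (hu.trans hu'.symm)

theorem isChain_map_connectedComponentMk {s : List V} (hs : s.Nodup) :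
    (s.map G.connectedComponentMk).IsChain fun K K' => K = K' → ℓ K = 1 :=
  (List.isChain_map _).2 <| hs.isChain.imp fun _ _ hne =>
    weight_eq_one_of_connectedComponentMk_eq hsingleton hℓ1 hne

end ClusterWeight

end SimpleGraph

theorem stmt_14_general {V : Type*} [Fintype V] (H : SimpleGraph V)
    (n : ℕ) (hn : n = Fintype.card V)
    (w : V → ℝ)
    (Ene : Set (Sym2 V))
    (hEne : Ene = {e ∈ H.edgeSet | ∃ v ∈ e, w v ≠ 1}) :
    (∀ v : V, w v ≠ 1 → ∀ u : V, (H.deleteEdges Ene).Reachable v u → u = v) ∧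
    (∀ ℓ : (H.deleteEdges Ene).ConnectedComponent → ℝ,
      (∀ u : V, w u ≠ 1 → ℓ ((H.deleteEdges Ene).connectedComponentMk u) = w u) →
      (∀ K : (H.deleteEdges Ene).ConnectedComponent,
        (∀ u : V, (H.deleteEdges Ene).connectedComponentMk u = K → w u = 1) → ℓ K = 1) →
      ∀ (x y : V) (P : H.Walk x y), P.IsPath →
        (P.support.map w).sum - n ≤
          ((((P.support.map (H.deleteEdges Ene).connectedComponentMk)).destutter
            (· ≠ ·)).map ℓ).sum ∧
        ((((P.support.map (H.deleteEdges Ene).connectedComponentMk)).destutter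
            (· ≠ ·)).map ℓ).sum ≤ (P.support.map w).sum) := by
  set G := H.deleteEdges Ene
  have hsingleton : ∀ v : V, w v ≠ 1 → ∀ u : V, G.Reachable v u → u = v := fun v hv _ h =>
    H.eq_of_reachable_deleteEdges_incident (p := fun x => w x ≠ 1) hv (hEne ▸ h)
  refine ⟨hsingleton, fun ℓ hℓ hℓ1 x y P hP => ?_⟩
  set clusters := P.support.map G.connectedComponentMk
  have hchain : clusters.IsChain fun K K' => K = K' → ℓ K = 1 :=
    SimpleGraph.isChain_map_connectedComponentMk hsingleton hℓ1 hP.support_nodup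
  have hsum : (clusters.map ℓ).sum = (P.support.map w).sum := by
    rw [List.map_map]
    exact congrArg List.sum <| List.map_congr_left fun u _ =>
      SimpleGraph.weight_connectedComponentMk hsingleton hℓ1 hℓ u
  have hlen : (clusters.length : ℝ) ≤ n := by
    rw [List.length_map, hn]
    exact_mod_cast hP.support_nodup.length_le_card
  constructor
  · calc (P.support.map w).sum - n ≤ (clusters.map ℓ).sum - clusters.length := by
          rw [hsum]; exact sub_le_sub_left hlen _
      _ ≤ _ := List.sum_map_sub_length_le_sum_map_destutter ℓ hchain
  · exact hsum ▸ List.sum_map_destutter_le_sum_map ℓ hchain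

/-- Let `H` be a finite simple graph with `n` vertices and `w : V → ℝ≥0`;
a vertex is trivial if `w v = 1`. Let `E_{≠1}` be the edges incident to some non-trivial
vertex and call the connected components of `H - E_{≠1}` clusters. Then:
(a) every non-trivial vertex is a singleton cluster; and
(b) with `ℓ(K) = w u` for a singleton cluster `K = {u}` of a non-trivial vertex `u` and
`ℓ(K) = 1` for clusters consisting only of trivial vertices, every simple path `P` in `H`
satisfies `w(P) - n ≤ ℓ(P̂) ≤ w(P)`, where `P̂` is the cluster sequence obtained from `P` by
contracting maximal runs of consecutive vertices lying in a common cluster. -/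
theorem stmt_14 {V : Type*} [Fintype V] (H : SimpleGraph V)
    (n : ℕ) (hn : n = Fintype.card V)
    (w : V → ℝ) (hw : ∀ v, 0 ≤ w v)
    (Ene : Set (Sym2 V))
    (hEne : Ene = {e ∈ H.edgeSet | ∃ v ∈ e, w v ≠ 1}) :
    (∀ v : V, w v ≠ 1 → ∀ u : V, (H.deleteEdges Ene).Reachable v u → u = v) ∧
    (∀ ℓ : (H.deleteEdges Ene).ConnectedComponent → ℝ,
      (∀ u : V, w u ≠ 1 → ℓ ((H.deleteEdges Ene).connectedComponentMk u) = w u) →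
      (∀ K : (H.deleteEdges Ene).ConnectedComponent,
        (∀ u : V, (H.deleteEdges Ene).connectedComponentMk u = K → w u = 1) → ℓ K = 1) →
      ∀ (x y : V) (P : H.Walk x y), P.IsPath →
        (P.support.map w).sum - n ≤
          ((((P.support.map (H.deleteEdges Ene).connectedComponentMk)).destutter
            (· ≠ ·)).map ℓ).sum ∧
        ((((P.support.map (H.deleteEdges Ene).connectedComponentMk)).destutter
            (· ≠ ·)).map ℓ).sum ≤ (P.support.map w).sum) :=
  stmt_14_general H n hn w Ene hEne
end

section
/- Let T = (V,E) be a finite tree and let (c_0, c_1, …, c_{N-1}) be an Euler tour representation of T, i.e., a cyclic sequence listing exactly once each self-loop (v,v) for v ∈ V and each directed edge (u,v) and (v,u) for every tree edge {u,v} ∈ E, such that for every index i, the head of c_i equals the tail of c_{(i+1) mod N}. Then for every contiguous (cyclic) interval J of this sequence, the set E_J = {{u,v} ∈ E : (u,v) ∈ J or (v,u) ∈ J} of tree edges appearing in J spans a connected subgraph of T; consequently, if E_J is nonempty, the subgraph (V(E_J), E_J) is a subtree of T and |E_J| = |V(E_J)| - 1, where V(E_J) is the set of endpoints of edges in E_J.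 -/
/-!
Since consecutive arcs meet head to tail, the arcs of the interval `J` are the steps
`x₀ → x₁ → ⋯ → x_len` of a walk in `T` in which a step is either a self-loop or a tree edge,
and `E_J` is exactly the set of edges of the non-loop steps. Every endpoint of an edge of `E_J`
is some `xₖ`, and the walk reaches it from `x₀` using only edges of `E_J`, so `E_J` spans a
connected graph. Being a subgraph of the tree `T` it is acyclic, hence a tree, and so has one
edge fewer than vertices.
-/

namespace SimpleGraph

variable {V : Type*} {G T : SimpleGraph V}

theorem mem_support_iff_exists_mem_edgeSet {v : V} :
    v ∈ G.support ↔ ∃ e ∈ G.edgeSet, v ∈ e := by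
  refine ⟨fun ⟨w, hw⟩ => ⟨s(v, w), hw, Sym2.mem_mk_left v w⟩, fun ⟨e, he, hv⟩ => ?_⟩
  rw [← Sym2.other_spec hv] at he
  exact ⟨_, he⟩

theorem connected_induce_support (hne : G.support.Nonempty)
    (h : ∀ u ∈ G.support, ∀ v ∈ G.support, G.Reachable u v) :
    (G.induce G.support).Connected := by
  rw [connected_iff]
  refine ⟨?_, hne.to_subtype⟩
  rintro ⟨u, hu⟩ ⟨v, hv⟩
  obtain rfl | huv := eq_or_ne u v
  · rfl
  obtain ⟨p⟩ := h u hu v hv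
  exact ⟨p.induce _ fun _ => mem_support_of_mem_walk_support p (Walk.not_nil_of_ne huv)⟩

theorem IsAcyclic.ncard_edgeSet_add_one_of_le (hT : T.IsAcyclic) (hGT : G ≤ T)
    (hfin : G.support.Finite) (hG : (G.induce G.support).Connected) :
    G.edgeSet.ncard + 1 = G.support.ncard := by
  have : Finite G.support := hfin
  have hedges : Sym2.map (↑) '' (G.induce G.support).edgeSet = G.edgeSet :=
    (edgeSet_map _ _).symm.trans (congrArg edgeSet G.spanningCoe_induce_support)
  have hcard := (isTree_iff_connected_and_card.1 ⟨hG, (hT.anti hGT).induce _⟩).2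
  rwa [← hedges, Set.ncard_image_of_injective _ (Sym2.map.injective Subtype.val_injective),
    ← Nat.card_coe_set_eq, ← Nat.card_coe_set_eq]

end SimpleGraph

open SimpleGraph

section StepEdges

variable {V : Type*} (x : ℕ → V) (n : ℕ)

def stepEdges : Set (Sym2 V) :=
  {e | ∃ k < n, e = s(x k, x (k + 1)) ∧ x k ≠ x (k + 1)}

theorem edgeSet_fromEdgeSet_stepEdges :
    (fromEdgeSet (stepEdges x n)).edgeSet = stepEdges x n := by
  rw [edgeSet_fromEdgeSet, sdiff_eq_left, Set.disjoint_left]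
  rintro _ ⟨k, -, rfl, hne⟩
  simpa using hne

theorem stepEdges_subset_edgeSet {T : SimpleGraph V}
    (hx : ∀ k < n, x k ≠ x (k + 1) → T.Adj (x k) (x (k + 1))) :
    stepEdges x n ⊆ T.edgeSet := by
  rintro _ ⟨k, hk, rfl, hne⟩
  exact hx k hk hne

variable {x n}

theorem fromEdgeSet_stepEdges_adj {k : ℕ} (hk : k < n) (hne : x k ≠ x (k + 1)) :
    (fromEdgeSet (stepEdges x n)).Adj (x k) (x (k + 1)) :=
  (fromEdgeSet_adj _).2 ⟨⟨k, hk, rfl, hne⟩, hne⟩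

theorem reachable_fromEdgeSet_stepEdges {k : ℕ} (hk : k ≤ n) :
    (fromEdgeSet (stepEdges x n)).Reachable (x 0) (x k) := by
  induction k with
  | zero => rfl
  | succ k ih =>
    refine (ih (by omega)).trans ?_
    obtain h | h := eq_or_ne (x k) (x (k + 1))
    · rw [h]
    · exact (fromEdgeSet_stepEdges_adj hk h).reachable

variable (x n)

theorem support_fromEdgeSet_stepEdges_subset :
    (fromEdgeSet (stepEdges x n)).support ⊆ x '' Set.Iic n := by
  intro v hv
  rw [mem_support_iff_exists_mem_edgeSet, edgeSet_fromEdgeSet_stepEdges] at hv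
  obtain ⟨_, ⟨k, hk, rfl, -⟩, hv⟩ := hv
  rcases Sym2.mem_iff.1 hv with rfl | rfl
  · exact ⟨k, Set.mem_Iic.2 hk.le, rfl⟩
  · exact ⟨k + 1, Set.mem_Iic.2 hk, rfl⟩

theorem connected_induce_support_fromEdgeSet_stepEdges (hne : (stepEdges x n).Nonempty) :
    ((fromEdgeSet (stepEdges x n)).induce (fromEdgeSet (stepEdges x n)).support).Connected := by
  refine connected_induce_support ?_ fun u hu v hv => ?_
  · obtain ⟨_, k, hk, rfl, h⟩ := hne
    exact ⟨x k, x (k + 1), fromEdgeSet_stepEdges_adj hk h⟩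
  · obtain ⟨k, hk, rfl⟩ := support_fromEdgeSet_stepEdges_subset x n hu
    obtain ⟨l, hl, rfl⟩ := support_fromEdgeSet_stepEdges_subset x n hv
    exact (reachable_fromEdgeSet_stepEdges hk).symm.trans (reachable_fromEdgeSet_stepEdges hl)

end StepEdges

theorem stmt_16_general {V : Type*}
    (T : SimpleGraph V) (hT : T.IsTree)
    (c : ℕ → V × V)
    (arcs : Set (V × V))
    (harcs : arcs = {q : V × V | q.1 = q.2} ∪ {q : V × V | T.Adj q.1 q.2})
    (hmem : ∀ i, c i ∈ arcs)
    (hchain : ∀ i, (c i).2 = (c (i + 1)).1)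
    (j len : ℕ)
    (EJ : Set (Sym2 V))
    (hEJ : EJ = {e | ∃ k < len,
      e = s((c (j + k)).1, (c (j + k)).2) ∧ (c (j + k)).1 ≠ (c (j + k)).2})
    (VJ : Set V) (hVJ : VJ = {v | ∃ e ∈ EJ, v ∈ e}) :
    EJ ⊆ T.edgeSet ∧
    (EJ.Nonempty →
      ((SimpleGraph.fromEdgeSet EJ).induce VJ).Connected ∧
      EJ.ncard = VJ.ncard - 1) := by
  set x : ℕ → V := fun k => (c (j + k)).1
  have hc : ∀ k, c (j + k) = (x k, x (k + 1)) := fun k => Prod.ext rfl (hchain (j + k))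
  have hx : ∀ k < len, x k ≠ x (k + 1) → T.Adj (x k) (x (k + 1)) := fun k _ hne => by
    simpa [harcs, hc, hne] using hmem (j + k)
  obtain rfl : EJ = stepEdges x len := by simp only [hEJ, hc]; rfl
  obtain rfl : VJ = (fromEdgeSet (stepEdges x len)).support := by
    ext v
    rw [hVJ, mem_support_iff_exists_mem_edgeSet, edgeSet_fromEdgeSet_stepEdges]
    rfl
  have hsub := stepEdges_subset_edgeSet x len hx
  have hconn := connected_induce_support_fromEdgeSet_stepEdges x len
  refine ⟨hsub, fun hne => ⟨hconn hne, ?_⟩⟩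
  have hcard := hT.isAcyclic.ncard_edgeSet_add_one_of_le
    (edgeSet_subset_edgeSet.1 (by rwa [edgeSet_fromEdgeSet_stepEdges]))
    ((Set.finite_Iic len).image x |>.subset (support_fromEdgeSet_stepEdges_subset x len))
    (hconn hne)
  rw [edgeSet_fromEdgeSet_stepEdges] at hcard
  omega

/-- Let `T = (V,E)` be a finite tree and `(c_0, …, c_{N-1})` an Euler tour
representation of `T`: a cyclic sequence (here an `N`-periodic function `c : ℕ → V × V`)
listing exactly once each self-loop `(v,v)` and each directed version `(u,v)`, `(v,u)` of
every tree edge `{u,v}`, consecutive arcs meeting head-to-tail. Then for every contiguous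
cyclic interval `J` (starting at position `j`, of length `len ≤ N`), the set `E_J` of tree
edges appearing in `J` spans a connected subgraph of `T`; consequently, if `E_J ≠ ∅`, the
subgraph `(V(E_J), E_J)` is a subtree of `T` and `|E_J| = |V(E_J)| - 1`. -/
theorem stmt_16 {V : Type*} [Fintype V] [DecidableEq V]
    (T : SimpleGraph V) (hT : T.IsTree)
    (N : ℕ) (c : ℕ → V × V)
    (arcs : Set (V × V))
    (harcs : arcs = {q : V × V | q.1 = q.2} ∪ {q : V × V | T.Adj q.1 q.2})
    (hper : ∀ i, c (i + N) = c i)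
    (hmem : ∀ i, c i ∈ arcs)
    (hinj : ∀ i < N, ∀ j < N, c i = c j → i = j)
    (hsurj : ∀ q ∈ arcs, ∃ i < N, c i = q)
    (hchain : ∀ i, (c i).2 = (c (i + 1)).1)
    (j len : ℕ) (hlen : len ≤ N)
    (EJ : Set (Sym2 V))
    (hEJ : EJ = {e | ∃ k < len,
      e = s((c (j + k)).1, (c (j + k)).2) ∧ (c (j + k)).1 ≠ (c (j + k)).2})
    (VJ : Set V) (hVJ : VJ = {v | ∃ e ∈ EJ, v ∈ e}) :
    EJ ⊆ T.edgeSet ∧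
    (EJ.Nonempty →
      ((SimpleGraph.fromEdgeSet EJ).induce VJ).Connected ∧
      EJ.ncard = VJ.ncard - 1) :=
  stmt_16_general T hT c arcs harcs hmem hchain j len EJ hEJ VJ hVJ
end
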